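/- arXiv:2502.04261 — 7 statements merged into one kernel-verified Lean document; each statement's English description precedes it below -/
import Mathlib

section
/- Let m ≥ 2 and n ≥ 1, let T be a nontrivial subgroup of the symmetric group on Fin m and B a subgroup of the symmetric group on Fin n. Realize the wreath product W = T ≀ B as the group of pairs (f, b) with f : Fin n → T and b ∈ B, acting on Fin m × Fin n by (f, b)·(i, j) = (f(j) i, b j). For a permutation σ of a finite set S define ind(σ) = |S| − (number of orbits of σ on S, counting fixed points as orbits). Then the minimum of ind(g) over all nontrivial g ∈ W (acting on Fin m × Fin n) equals the minimum of ind(t) over all nontrivial t ∈ T (acting on Fin m); moreover the nontrivial elements of W attaining this minimum are exactly the pairs (f, 1) such that there is exactly one index j₀ ∈ Fin n with f(j₀) ≠ 1, and this f(j₀) attains the minimal index in T. -/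
/-!
Projecting `Fin m × Fin n → Fin n` semiconjugates `(f, b)` to `b`, and every orbit of `(f, b)`
meets the `m`-element fibre over a chosen point of each `b`-orbit; hence `(f, b)` has at most
`m` times as many orbits as `b`, i.e. `ind (f, b) ≥ m · ind b ≥ m` whenever `b ≠ 1`. Since
`ind t ≤ m - 1` for every `t ∈ Sym(m)`, minimal elements lie in the base group, where `(f, 1)` is the
disjoint union of the `f j` and `ind (f, 1) = ∑ j, ind (f j)`. Each nontrivial summand is at
least the minimal index of `T`, so the minimum is attained exactly when one summand is.
-/

/-- The index of a permutation: `|S|` minus the number of orbits (cycles, with fixed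
points counted as cycles of length 1). -/
noncomputable def permIndex {S : Type*} (σ : Equiv.Perm S) : ℕ :=
  Nat.card S - Nat.card (MulAction.orbitRel.Quotient (Subgroup.zpowers σ) S)

/-- The element of the imprimitive wreath product `T ≀ B` given by the pair `(f, b)`,
acting on `Fin m × Fin n` by `(f, b)·(i, j) = (f j i, b j)`. -/
def wperm {m n : ℕ} (f : Fin n → Equiv.Perm (Fin m)) (b : Equiv.Perm (Fin n)) :
    Equiv.Perm (Fin m × Fin n) where
  toFun p := (f p.2 p.1, b p.2)
  invFun p := ((f (b.symm p.2)).symm p.1, b.symm p.2)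
  left_inv p := by cases p; simp
  right_inv p := by cases p; simp

open MulAction Function

namespace Equiv.Perm

variable {α β : Type*}

abbrev Orbits (σ : Perm α) : Type _ := orbitRel.Quotient (Subgroup.zpowers σ) α

theorem permIndex_def (σ : Perm α) : permIndex σ = Nat.card α - Nat.card σ.Orbits := rfl

theorem orbits_mk_eq_mk_iff {σ : Perm α} {x y : α} :
    (Quotient.mk'' x : σ.Orbits) = Quotient.mk'' y ↔ σ.SameCycle x y := by
  rw [Quotient.eq'', orbitRel_apply, mem_orbit_iff, sameCycle_comm]
  constructor
  · rintro ⟨⟨_, k, rfl⟩, h⟩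
    exact ⟨k, h⟩
  · rintro ⟨k, h⟩
    exact ⟨⟨σ ^ k, k, rfl⟩, h⟩

theorem card_orbits_one : Nat.card (1 : Perm α).Orbits = Nat.card α :=
  (Nat.card_eq_of_bijective _ ⟨fun _ _ h => sameCycle_one.mp (orbits_mk_eq_mk_iff.mp h),
    Quotient.mk''_surjective⟩).symm

theorem card_orbits_le [Finite α] (σ : Perm α) : Nat.card σ.Orbits ≤ Nat.card α :=
  Nat.card_le_card_of_surjective _ Quotient.mk''_surjective

theorem card_orbits_lt [Finite α] {σ : Perm α} (hσ : σ ≠ 1) :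
    Nat.card σ.Orbits < Nat.card α := by
  obtain ⟨x, hx⟩ : ∃ x, σ x ≠ x := by simpa [Equiv.ext_iff] using hσ
  have : Fintype α := Fintype.ofFinite α
  have : Fintype σ.Orbits := Fintype.ofFinite _
  simp only [Nat.card_eq_fintype_card]
  refine Fintype.card_lt_of_surjective_not_injective _ Quotient.mk''_surjective fun hinj => hx ?_
  exact hinj (orbits_mk_eq_mk_iff.mpr (sameCycle_apply_left.mpr .rfl))

theorem permIndex_one : permIndex (1 : Perm α) = 0 := by
  rw [permIndex_def, card_orbits_one, Nat.sub_self]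

theorem permIndex_pos [Finite α] {σ : Perm α} (hσ : σ ≠ 1) : 0 < permIndex σ :=
  Nat.sub_pos_of_lt (card_orbits_lt hσ)

theorem permIndex_eq_zero_iff [Finite α] {σ : Perm α} : permIndex σ = 0 ↔ σ = 1 :=
  ⟨fun h => by_contra fun hσ => (permIndex_pos hσ).ne' h, fun h => h ▸ permIndex_one⟩

theorem permIndex_lt_card [Finite α] [Nonempty α] (σ : Perm α) :
    permIndex σ < Nat.card α := by
  have : Nonempty σ.Orbits := ⟨Quotient.mk'' (Classical.arbitrary α)⟩
  exact Nat.sub_lt Nat.card_pos Nat.card_pos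

theorem _root_.Function.Semiconj.perm_zpow {σ : Perm α} {τ : Perm β} {π : α → β}
    (h : Semiconj π σ τ) : ∀ k : ℤ, Semiconj π ⇑(σ ^ k) ⇑(τ ^ k)
  | (k : ℕ) => by simpa only [zpow_natCast, coe_pow] using h.iterate_right k
  | .negSucc k => by
    simp only [zpow_negSucc]
    exact (h.iterate_right (k + 1)).inverses_right
      (by rw [← coe_pow]; exact (σ ^ (k + 1)).apply_symm_apply)
      (by rw [← coe_pow]; exact (τ ^ (k + 1)).symm_apply_apply)

theorem _root_.Function.Semiconj.sameCycle {σ : Perm α} {τ : Perm β} {π : α → β}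
    (h : Semiconj π σ τ) {x y : α} (hxy : σ.SameCycle x y) : τ.SameCycle (π x) (π y) := by
  obtain ⟨k, rfl⟩ := hxy
  exact ⟨k, ((h.perm_zpow k) x).symm⟩

theorem card_orbits_le_of_semiconj [Finite α] [Finite β] {σ : Perm α} {τ : Perm β}
    {π : α → β} (h : Semiconj π σ τ) {k : ℕ}
    (hk : ∀ y, Nat.card {x // π x = y} ≤ k) :
    Nat.card σ.Orbits ≤ k * Nat.card τ.Orbits := by
  have : Fintype τ.Orbits := Fintype.ofFinite _
  -- every `σ`-orbit meets the fibre over the chosen representative of its image `τ`-orbit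
  have hsurj : Surjective fun p : Σ c : τ.Orbits, {x // π x = c.out} =>
      (Quotient.mk'' p.2.1 : σ.Orbits) := by
    refine Quotient.ind' fun x => ?_
    obtain ⟨j, hj⟩ :=
      (orbits_mk_eq_mk_iff.mp (Quotient.out_eq' (Quotient.mk'' (π x) : τ.Orbits))).symm
    exact ⟨⟨_, (σ ^ j) x, (h.perm_zpow j x).trans hj⟩,
      orbits_mk_eq_mk_iff.mpr (sameCycle_zpow_left.mpr .rfl)⟩
  calc Nat.card σ.Orbits ≤ Nat.card (Σ c : τ.Orbits, {x // π x = c.out}) :=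
        Nat.card_le_card_of_surjective _ hsurj
    _ = ∑ c : τ.Orbits, Nat.card {x // π x = c.out} := Nat.card_sigma
    _ ≤ Fintype.card τ.Orbits • k := Finset.sum_le_card_nsmul _ _ _ fun c _ => hk _
    _ = k * Nat.card τ.Orbits := by rw [smul_eq_mul, mul_comm, Nat.card_eq_fintype_card]

theorem mul_permIndex_le_permIndex_of_semiconj [Finite α] [Finite β] {σ : Perm α}
    {τ : Perm β} {π : α → β} (h : Semiconj π σ τ) {k : ℕ}
    (hk : ∀ y, Nat.card {x // π x = y} = k) :
    k * permIndex τ ≤ permIndex σ := by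
  have : Fintype β := Fintype.ofFinite β
  have hα : Nat.card α = k * Nat.card β := by
    rw [← Nat.card_congr (Equiv.sigmaFiberEquiv π), Nat.card_sigma,
      Finset.sum_congr rfl fun y _ => hk y, Finset.sum_const, Finset.card_univ, smul_eq_mul,
      mul_comm, Nat.card_eq_fintype_card]
  have hσ := card_orbits_le_of_semiconj h fun y => (hk y).le
  have hτ := card_orbits_le τ
  rw [permIndex_def, permIndex_def, Nat.mul_sub, hα]
  omega

end Equiv.Perm

open Equiv Perm

theorem Fintype.sum_eq_iff_of_forall_ne_zero_le {ι : Type*} [Fintype ι] {a : ι → ℕ} {M : ℕ}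
    (hM : 0 < M) (ha : ∀ j, a j ≠ 0 → M ≤ a j) :
    ∑ j, a j = M ↔ ∃ j₀, a j₀ = M ∧ ∀ j ≠ j₀, a j = 0 := by
  classical
  constructor
  · intro hsum
    obtain ⟨j₀, -, hj₀⟩ := Finset.exists_ne_zero_of_sum_ne_zero (hsum ▸ hM.ne')
    have hsplit := Finset.add_sum_erase _ a (Finset.mem_univ j₀)
    have hj₀M := ha j₀ hj₀
    refine ⟨j₀, by omega, fun j hj => ?_⟩
    exact Finset.sum_eq_zero_iff.mp (by omega) j (Finset.mem_erase.mpr ⟨hj, Finset.mem_univ j⟩)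
  · rintro ⟨j₀, hj₀, h⟩
    rw [Finset.sum_eq_single j₀ (fun j _ => h j) (absurd (Finset.mem_univ j₀)), hj₀]

section Wreath

variable {m n : ℕ}

theorem wperm_one_one : wperm (1 : Fin n → Perm (Fin m)) 1 = 1 := rfl

theorem semiconj_snd_wperm (f : Fin n → Perm (Fin m)) (b : Perm (Fin n)) :
    Semiconj Prod.snd (wperm f b) b := fun _ => rfl

theorem semiconj_wperm_one (f : Fin n → Perm (Fin m)) (j : Fin n) :
    Semiconj (fun i => (i, j)) (f j) (wperm f 1) := fun _ => rfl

theorem sameCycle_wperm_one_iff {f : Fin n → Perm (Fin m)} {i i' : Fin m} {j j' : Fin n} :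
    (wperm f 1).SameCycle (i, j) (i', j') ↔ j = j' ∧ (f j).SameCycle i i' := by
  refine ⟨fun h => ?_, fun ⟨hj, h⟩ => hj ▸ (semiconj_wperm_one f j).sameCycle h⟩
  obtain rfl : j = j' := sameCycle_one.mp ((semiconj_snd_wperm f 1).sameCycle h)
  obtain ⟨k, hk⟩ := h
  rw [← semiconj_wperm_one f j |>.perm_zpow k i] at hk
  exact ⟨rfl, k, (Prod.ext_iff.mp hk).1⟩

noncomputable def orbitsWpermOneEquiv (f : Fin n → Perm (Fin m)) :
    (wperm f 1).Orbits ≃ Σ j, (f j).Orbits where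
  toFun := Quotient.lift (fun p => ⟨p.2, Quotient.mk'' p.1⟩) fun ⟨i, j⟩ ⟨i', j'⟩ h => by
    obtain ⟨rfl, hi⟩ := sameCycle_wperm_one_iff.mp (orbits_mk_eq_mk_iff.mp (Quotient.sound h))
    exact congrArg (Sigma.mk j) (orbits_mk_eq_mk_iff.mpr hi)
  invFun q := Quotient.liftOn' q.2 (fun i => Quotient.mk'' (i, q.1)) fun i i' h =>
    orbits_mk_eq_mk_iff.mpr
      (sameCycle_wperm_one_iff.mpr ⟨rfl, orbits_mk_eq_mk_iff.mp (Quotient.sound h)⟩)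
  left_inv := Quotient.ind fun _ => rfl
  right_inv := fun ⟨_, q⟩ => Quotient.inductionOn' q fun _ => rfl

theorem permIndex_wperm_one (f : Fin n → Perm (Fin m)) :
    permIndex (wperm f 1) = ∑ j, permIndex (f j) := by
  have hcard : Nat.card (Fin m × Fin n) = ∑ _ : Fin n, Nat.card (Fin m) := by simp [mul_comm]
  rw [permIndex_def, Nat.card_congr (orbitsWpermOneEquiv f), Nat.card_sigma, hcard,
    ← Finset.sum_tsub_distrib _ fun j _ => card_orbits_le (f j)]
  rfl

theorem mul_permIndex_le_permIndex_wperm (f : Fin n → Perm (Fin m)) (b : Perm (Fin n)) :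
    m * permIndex b ≤ permIndex (wperm f b) :=
  mul_permIndex_le_permIndex_of_semiconj (semiconj_snd_wperm f b) fun y =>
    (Nat.card_congr ⟨fun p => p.1.1, fun i => ⟨(i, y), rfl⟩,
      fun ⟨_, hp⟩ => by subst hp; rfl, fun _ => rfl⟩).trans (Nat.card_fin m)

theorem le_permIndex_wperm_of_ne_one (f : Fin n → Perm (Fin m)) {b : Perm (Fin n)}
    (hb : b ≠ 1) :
    m ≤ permIndex (wperm f b) :=
  (Nat.le_mul_of_pos_right m (permIndex_pos hb)).trans (mul_permIndex_le_permIndex_wperm f b)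

theorem le_permIndex_wperm {f : Fin n → Perm (Fin m)} {b : Perm (Fin n)} {M : ℕ}
    (hMm : M ≤ m) (hM : ∀ j, f j ≠ 1 → M ≤ permIndex (f j)) (hne : wperm f b ≠ 1) :
    M ≤ permIndex (wperm f b) := by
  by_cases hb : b = 1
  · subst hb
    obtain ⟨j, hj⟩ := Function.ne_iff.mp fun hf : f = 1 => hne (hf ▸ wperm_one_one)
    rw [permIndex_wperm_one]
    exact (hM j hj).trans (Finset.single_le_sum (f := fun j => permIndex (f j))
      (fun j _ => Nat.zero_le _) (Finset.mem_univ j))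
  · exact hMm.trans (le_permIndex_wperm_of_ne_one f hb)

theorem permIndex_wperm_eq_iff {f : Fin n → Perm (Fin m)} {b : Perm (Fin n)} {M : ℕ}
    (hM0 : 0 < M) (hMm : M < m) (hM : ∀ j, f j ≠ 1 → M ≤ permIndex (f j)) :
    permIndex (wperm f b) = M ↔
      b = 1 ∧ ∃ j₀, f j₀ ≠ 1 ∧ (∀ j ≠ j₀, f j = 1) ∧ permIndex (f j₀) = M := by
  by_cases hb : b = 1
  · subst hb
    rw [permIndex_wperm_one, Fintype.sum_eq_iff_of_forall_ne_zero_le hM0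
      fun j hj => hM j (mt permIndex_eq_zero_iff.mpr hj)]
    simp only [permIndex_eq_zero_iff, true_and]
    exact exists_congr fun j₀ => ⟨fun ⟨hj₀, h⟩ =>
      ⟨permIndex_eq_zero_iff.not.mp (hj₀.trans_ne hM0.ne'), h, hj₀⟩, fun ⟨_, h, hj₀⟩ => ⟨hj₀, h⟩⟩
  · have := le_permIndex_wperm_of_ne_one f hb
    simp only [hb, false_and, iff_false]
    omega

end Wreath

theorem min_index_wreath_general (m n : ℕ) (hn : 1 ≤ n)
    (T : Subgroup (Equiv.Perm (Fin m))) (hT : T ≠ ⊥)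
    (B : Subgroup (Equiv.Perm (Fin n))) :
    sInf {k : ℕ | ∃ (f : Fin n → Equiv.Perm (Fin m)) (b : Equiv.Perm (Fin n)),
        (∀ j, f j ∈ T) ∧ b ∈ B ∧ wperm f b ≠ 1 ∧ permIndex (wperm f b) = k}
      = sInf {k : ℕ | ∃ t ∈ T, t ≠ 1 ∧ permIndex t = k} ∧
    ∀ (f : Fin n → Equiv.Perm (Fin m)) (b : Equiv.Perm (Fin n)),
      (∀ j, f j ∈ T) → b ∈ B → wperm f b ≠ 1 →
      (permIndex (wperm f b) = sInf {k : ℕ | ∃ t ∈ T, t ≠ 1 ∧ permIndex t = k} ↔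
        b = 1 ∧ ∃ j₀ : Fin n, f j₀ ≠ 1 ∧ (∀ j, j ≠ j₀ → f j = 1) ∧
          permIndex (f j₀) = sInf {k : ℕ | ∃ t ∈ T, t ≠ 1 ∧ permIndex t = k}) := by
  set M := sInf {k : ℕ | ∃ t ∈ T, t ≠ 1 ∧ permIndex t = k}
  obtain ⟨t₀, ht₀T, ht₀, ht₀M⟩ : M ∈ {k : ℕ | ∃ t ∈ T, t ≠ 1 ∧ permIndex t = k} := by
    obtain ⟨t, ht⟩ := Subgroup.ne_bot_iff_exists_ne_one.mp hT
    exact Nat.sInf_mem ⟨_, t, t.2, fun h => ht (Subtype.ext h), rfl⟩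
  have hM (t) (ht : t ∈ T) (h : t ≠ 1) : M ≤ permIndex t := Nat.sInf_le ⟨t, ht, h, rfl⟩
  have hM0 : 0 < M := ht₀M ▸ permIndex_pos ht₀
  have hMm : M < m := by
    obtain ⟨i, -⟩ : ∃ i, t₀ i ≠ i := by simpa [Equiv.ext_iff] using ht₀
    have : Nonempty (Fin m) := ⟨i⟩
    simpa [ht₀M] using permIndex_lt_card t₀
  have hiff (f : Fin n → Perm (Fin m)) (b : Perm (Fin n)) (hf : ∀ j, f j ∈ T) :=
    permIndex_wperm_eq_iff (b := b) hM0 hMm fun j => hM (f j) (hf j)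
  let j₀ : Fin n := ⟨0, hn⟩
  let f₀ : Fin n → Perm (Fin m) := Pi.mulSingle j₀ t₀
  have hf₀ : ∀ j, f₀ j ∈ T := fun j => by
    by_cases h : j = j₀ <;> simp [f₀, h, ht₀T, T.one_mem]
  have hwit : permIndex (wperm f₀ 1) = M :=
    (hiff f₀ 1 hf₀).mpr ⟨rfl, j₀, by simpa [f₀] using ht₀,
      fun j hj => Pi.mulSingle_eq_of_ne hj _, by simpa [f₀] using ht₀M⟩
  have hwit_mem : M ∈ {k : ℕ | ∃ (f : Fin n → Equiv.Perm (Fin m)) (b : Equiv.Perm (Fin n)),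
      (∀ j, f j ∈ T) ∧ b ∈ B ∧ wperm f b ≠ 1 ∧ permIndex (wperm f b) = k} :=
    ⟨_, 1, hf₀, B.one_mem, fun h => hM0.ne' (hwit ▸ h ▸ permIndex_one), hwit⟩
  refine ⟨le_antisymm (Nat.sInf_le hwit_mem) (le_csInf ⟨M, hwit_mem⟩ ?_),
    fun f b hf _ _ => hiff f b hf⟩
  rintro _ ⟨f, b, hf, -, hne, rfl⟩
  exact le_permIndex_wperm hMm.le (fun j => hM _ (hf j)) hne

theorem min_index_wreath (m n : ℕ) (hm : 2 ≤ m) (hn : 1 ≤ n)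
    (T : Subgroup (Equiv.Perm (Fin m))) (hT : T ≠ ⊥)
    (B : Subgroup (Equiv.Perm (Fin n))) :
    sInf {k : ℕ | ∃ (f : Fin n → Equiv.Perm (Fin m)) (b : Equiv.Perm (Fin n)),
        (∀ j, f j ∈ T) ∧ b ∈ B ∧ wperm f b ≠ 1 ∧ permIndex (wperm f b) = k}
      = sInf {k : ℕ | ∃ t ∈ T, t ≠ 1 ∧ permIndex t = k} ∧
    ∀ (f : Fin n → Equiv.Perm (Fin m)) (b : Equiv.Perm (Fin n)),
      (∀ j, f j ∈ T) → b ∈ B → wperm f b ≠ 1 →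
      (permIndex (wperm f b) = sInf {k : ℕ | ∃ t ∈ T, t ≠ 1 ∧ permIndex t = k} ↔
        b = 1 ∧ ∃ j₀ : Fin n, f j₀ ≠ 1 ∧ (∀ j, j ≠ j₀ → f j = 1) ∧
          permIndex (f j₀) = sInf {k : ℕ | ∃ t ∈ T, t ≠ 1 ∧ permIndex t = k}) :=
  min_index_wreath_general m n hn T hT B
end

section
/- Let ℓ be an odd prime, d ≥ 1, and m = gcd(d, ℓ − 1). Let ρ : ZMod d → ZMod m be the natural reduction map (well defined since m ∣ d) and let ψ : (ZMod ℓ)ˣ → ZMod m be any surjective group homomorphism (one exists since (ZMod ℓ)ˣ is cyclic of order ℓ − 1 and m ∣ ℓ − 1). Let Γ = {(c, u) ∈ ZMod d × (ZMod ℓ)ˣ : ρ(c) = ψ(u)}, a subgroup of the product, and let S be the set of vectors v : ZMod d → ZMod ℓ that are supported at exactly one index and nonzero there. Then the formula (c, u)·v = u • (c • v), where (c • v)(i) = v(i + c), defines an action of Γ on S, and the number of orbits of Γ on S equals gcd(d, ℓ − 1). (This computes Türkelli's constant b_T(C_ℓ ≀ C_d, ℚ) = gcd(d, ℓ − 1)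 via the φ-twisted cyclotomic action of the fibered product G(π, φ).) -/
/-!
A vector supported at a single index is `Pi.single i a` with `a` a unit, and `(c, u)` sends it
to `Pi.single (i - c) (u * a)`. Hence `ρ i + ψ a ∈ ZMod m` is constant on `Γ`-orbits, since
`ρ c = ψ u` on `Γ`; conversely two such vectors with the same value of this invariant are related
by `(i - j, b * a⁻¹) ∈ Γ`. So the orbits are exactly the level sets of the invariant, which is
onto `ZMod m` because `ρ` is, and there are `m` of them.
-/

/-- The `φ`-twisted cyclotomic action of a pair `(c, u) ∈ ZMod d × (ZMod ℓ)ˣ` on vectors: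
`(c, u)·v = u • (c • v)` where `(c • v)(i) = v (i + c)`. -/
def twAct (ℓ d : ℕ) (p : ZMod d × (ZMod ℓ)ˣ) (v : ZMod d → ZMod ℓ) :
    ZMod d → ZMod ℓ :=
  fun i => (p.2 : ZMod ℓ) * v (i + p.1)

open Function

section SingleSupport

variable {ι M : Type*} [DecidableEq ι] [Zero M]

theorem existsUnique_ne_zero_iff_eq_single {v : ι → M} :
    (∃! i, v i ≠ 0) ↔ ∃ i a, a ≠ 0 ∧ v = Pi.single i a := by
  constructor
  · rintro ⟨i, hi, huniq⟩
    refine ⟨i, v i, hi, funext fun j => ?_⟩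
    by_cases hj : j = i
    · subst hj
      simp
    · simpa [hj] using mt (huniq j) hj
  · rintro ⟨i, a, ha, rfl⟩
    refine ⟨i, by simpa using ha, fun j hj => ?_⟩
    by_contra h
    exact hj (Pi.single_eq_of_ne (M := fun _ => M) h a)

theorem Pi.single_inj_of_ne_zero {i j : ι} {a b : M} (ha : a ≠ 0)
    (h : (Pi.single i a : ι → M) = Pi.single j b) : i = j ∧ a = b := by
  have hij : i = j := by
    by_contra hij
    apply ha
    simpa [hij] using congrFun h i
  subst hij
  exact ⟨rfl, Pi.single_injective i h⟩

end SingleSupport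

section TwistedAction

variable {ℓ d : ℕ}

theorem twAct_zero_one (v : ZMod d → ZMod ℓ) : twAct ℓ d (0, 1) v = v := by
  funext i
  simp [twAct]

theorem twAct_add_mul (p q : ZMod d × (ZMod ℓ)ˣ) (v : ZMod d → ZMod ℓ) :
    twAct ℓ d (p.1 + q.1, p.2 * q.2) v = twAct ℓ d p (twAct ℓ d q v) := by
  funext i
  simp [twAct, mul_assoc, add_assoc]

theorem twAct_single (c : ZMod d) (u : (ZMod ℓ)ˣ) (i : ZMod d) (a : ZMod ℓ) :
    twAct ℓ d (c, u) (Pi.single i a) = Pi.single (i - c) (u * a) := by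
  funext j
  simp only [twAct, Pi.single_apply, eq_sub_iff_add_eq, mul_ite, mul_zero]

theorem existsUnique_twAct_ne_zero (p : ZMod d × (ZMod ℓ)ˣ) {v : ZMod d → ZMod ℓ}
    (hv : ∃! i, v i ≠ 0) : ∃! i, twAct ℓ d p v i ≠ 0 := by
  obtain ⟨i, a, ha, rfl⟩ := existsUnique_ne_zero_iff_eq_single.mp hv
  rw [twAct_single]
  exact existsUnique_ne_zero_iff_eq_single.mpr ⟨_, _, by simpa using ha, rfl⟩

variable {m : ℕ} (hm : m ∣ d) (ψ : (ZMod ℓ)ˣ →* Multiplicative (ZMod m))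

def fiberedProduct : Set (ZMod d × (ZMod ℓ)ˣ) :=
  {p | ZMod.castHom hm (ZMod m) p.1 = (ψ p.2).toAdd}

def twOrbit (Γ : Set (ZMod d × (ZMod ℓ)ˣ)) (v : ZMod d → ZMod ℓ) : Set (ZMod d → ZMod ℓ) :=
  {w | ∃ p ∈ Γ, w = twAct ℓ d p v}

def singleInvariant (i : ZMod d) (a : (ZMod ℓ)ˣ) : ZMod m :=
  ZMod.castHom hm (ZMod m) i + (ψ a).toAdd

def singleInvariantLevel (t : ZMod m) : Set (ZMod d → ZMod ℓ) :=
  {w | ∃ j b, singleInvariant hm ψ j b = t ∧ w = Pi.single j (b : ZMod ℓ)}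

theorem twOrbit_single (i : ZMod d) (a : (ZMod ℓ)ˣ) :
    twOrbit (fiberedProduct hm ψ) (Pi.single i (a : ZMod ℓ)) =
      singleInvariantLevel hm ψ (singleInvariant hm ψ i a) := by
  ext w
  constructor
  · rintro ⟨⟨c, u⟩, hcu, rfl⟩
    change ZMod.castHom hm (ZMod m) c = (ψ u).toAdd at hcu
    refine ⟨i - c, u * a, ?_, by rw [twAct_single, Units.val_mul]⟩
    simp only [singleInvariant, map_sub, map_mul, toAdd_mul]
    linear_combination -hcu
  · rintro ⟨j, b, hjb, rfl⟩
    refine ⟨(i - j, b * a⁻¹), ?_, ?_⟩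
    · change ZMod.castHom hm (ZMod m) (i - j) = (ψ (b * a⁻¹)).toAdd
      simp only [singleInvariant] at hjb
      rw [map_sub, map_mul, map_inv, toAdd_mul, toAdd_inv]
      linear_combination -hjb
    · rw [twAct_single, sub_sub_cancel, ← Units.val_mul, inv_mul_cancel_right]

theorem singleInvariantLevel_injective [Nontrivial (ZMod ℓ)] :
    Injective (singleInvariantLevel hm ψ) := by
  intro t t' h
  obtain ⟨i, rfl⟩ := ZMod.castHom_surjective hm t
  have hmem : Pi.single i ((1 : (ZMod ℓ)ˣ) : ZMod ℓ) ∈ singleInvariantLevel hm ψ t' :=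
    h ▸ ⟨i, 1, by simp [singleInvariant], rfl⟩
  obtain ⟨j, b, rfl, hij⟩ := hmem
  obtain ⟨rfl, hb⟩ := Pi.single_inj_of_ne_zero (Units.ne_zero 1) hij
  simp [singleInvariant, ← Units.ext hb]

variable [Fact ℓ.Prime]

theorem twOrbits_eq_range :
    {o | ∃ v ∈ {v : ZMod d → ZMod ℓ | ∃! i, v i ≠ 0}, o = twOrbit (fiberedProduct hm ψ) v} =
      Set.range (singleInvariantLevel hm ψ) := by
  ext o
  constructor
  · rintro ⟨v, hv, rfl⟩
    obtain ⟨i, a, ha, rfl⟩ := existsUnique_ne_zero_iff_eq_single.mp hv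
    exact ⟨_, (twOrbit_single hm ψ i (Units.mk0 a ha)).symm⟩
  · rintro ⟨t, rfl⟩
    obtain ⟨i, rfl⟩ := ZMod.castHom_surjective hm t
    refine ⟨Pi.single i ((1 : (ZMod ℓ)ˣ) : ZMod ℓ),
      existsUnique_ne_zero_iff_eq_single.mpr ⟨i, 1, one_ne_zero, rfl⟩, ?_⟩
    rw [twOrbit_single]
    simp [singleInvariant]

theorem card_twOrbits :
    Nat.card {o | ∃ v ∈ {v : ZMod d → ZMod ℓ | ∃! i, v i ≠ 0},
      o = twOrbit (fiberedProduct hm ψ) v} = m := by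
  rw [twOrbits_eq_range, Nat.card_range_of_injective (singleInvariantLevel_injective hm ψ),
    Nat.card_zmod]

end TwistedAction

theorem turkelli_b_of_Cl_wr_Cd_general (ℓ d : ℕ) (hℓ : ℓ.Prime)
    (ψ : (ZMod ℓ)ˣ →* Multiplicative (ZMod (Nat.gcd d (ℓ - 1)))) :
    -- Γ, the fibered product, as a set of pairs
    let Γ : Set (ZMod d × (ZMod ℓ)ˣ) :=
      {p | ZMod.castHom (Nat.gcd_dvd_left d (ℓ - 1)) (ZMod (Nat.gcd d (ℓ - 1))) p.1
        = Multiplicative.toAdd (ψ p.2)}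
    -- S, the vectors supported at exactly one index and nonzero there
    let S : Set (ZMod d → ZMod ℓ) := {v | ∃! i, v i ≠ 0}
    -- the formula defines an action of Γ on S:
    ((∀ p ∈ Γ, ∀ v ∈ S, twAct ℓ d p v ∈ S) ∧
      (∀ v : ZMod d → ZMod ℓ, twAct ℓ d (0, 1) v = v) ∧
      (∀ p q : ZMod d × (ZMod ℓ)ˣ, ∀ v : ZMod d → ZMod ℓ,
        twAct ℓ d (p.1 + q.1, p.2 * q.2) v = twAct ℓ d p (twAct ℓ d q v))) ∧
    -- and the number of orbits of Γ on S equals gcd(d, ℓ - 1):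
    Nat.card ↥{o : Set (ZMod d → ZMod ℓ) |
        ∃ v ∈ S, o = {w | ∃ p ∈ Γ, w = twAct ℓ d p v}} = Nat.gcd d (ℓ - 1) := by
  have : Fact ℓ.Prime := ⟨hℓ⟩
  exact ⟨⟨fun p _ _ hv => existsUnique_twAct_ne_zero p hv, twAct_zero_one, twAct_add_mul⟩,
    card_twOrbits (Nat.gcd_dvd_left d (ℓ - 1)) ψ⟩

theorem turkelli_b_of_Cl_wr_Cd (ℓ d : ℕ) (hℓ : ℓ.Prime) (hodd : Odd ℓ) (hd : 1 ≤ d)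
    (ψ : (ZMod ℓ)ˣ →* Multiplicative (ZMod (Nat.gcd d (ℓ - 1))))
    (hψ : Function.Surjective ψ) :
    -- Γ, the fibered product, as a set of pairs
    let Γ : Set (ZMod d × (ZMod ℓ)ˣ) :=
      {p | ZMod.castHom (Nat.gcd_dvd_left d (ℓ - 1)) (ZMod (Nat.gcd d (ℓ - 1))) p.1
        = Multiplicative.toAdd (ψ p.2)}
    -- S, the vectors supported at exactly one index and nonzero there
    let S : Set (ZMod d → ZMod ℓ) := {v | ∃! i, v i ≠ 0}
    -- the formula defines an action of Γ on S:
    ((∀ p ∈ Γ, ∀ v ∈ S, twAct ℓ d p v ∈ S) ∧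
      (∀ v : ZMod d → ZMod ℓ, twAct ℓ d (0, 1) v = v) ∧
      (∀ p q : ZMod d × (ZMod ℓ)ˣ, ∀ v : ZMod d → ZMod ℓ,
        twAct ℓ d (p.1 + q.1, p.2 * q.2) v = twAct ℓ d p (twAct ℓ d q v))) ∧
    -- and the number of orbits of Γ on S equals gcd(d, ℓ - 1):
    Nat.card ↥{o : Set (ZMod d → ZMod ℓ) |
        ∃ v ∈ S, o = {w | ∃ p ∈ Γ, w = twAct ℓ d p v}} = Nat.gcd d (ℓ - 1) :=
  turkelli_b_of_Cl_wr_Cd_general ℓ d hℓ ψ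
end

section
/- Let ℓ be a prime, m ≥ 1, j ∈ ZMod m, and s ∈ (ZMod ℓ)ˣ. Let t = m / gcd(j, m) be the additive order of j in ZMod m. Then the number of vectors v : ZMod m → ZMod ℓ satisfying v(i + j) = s • v(i) for all i ∈ ZMod m equals ℓ^{gcd(j, m)} if s^t = 1, and equals 1 (only the zero vector) otherwise. In particular, the number of nonzero fixed vectors of the map v ↦ s • (j • v) is ℓ^{m/t} − 1 if s^t = 1 and 0 otherwise. -/
/-!
Let `v : G → R` satisfy `v (i + j) = c * v i`, with `R` a domain. Then `v i = c ^ t * v i` for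
`t` the order of `j`, so `v = 0` unless `c ^ t = 1`. If `c ^ t = 1`, then `c ^ k` only depends
on `k • j`, which gives a nowhere vanishing solution `ψ`; dividing by `ψ` identifies the
solutions with the `j`-periodic functions, i.e. with the functions on `G ⧸ ⟨j⟩`, of which there
are `|R| ^ [G : ⟨j⟩]`.
-/

open Function AddSubgroup

section TwistedFunctions

variable {G R : Type*}

theorem apply_add_nsmul_of_twisted [AddMonoid G] [Monoid R] {c : R} {j : G} {v : G → R}
    (hv : ∀ i, v (i + j) = c * v i) (n : ℕ) (i : G) : v (i + n • j) = c ^ n * v i := by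
  induction n generalizing i with
  | zero => simp
  | succ n ih => rw [succ_nsmul', ← add_assoc, ih, hv, pow_succ, mul_assoc]

theorem eq_zero_of_twisted_of_pow_ne_one [AddMonoid G] [Ring R] [NoZeroDivisors R]
    {c : R} {j : G} (hc : c ^ addOrderOf j ≠ 1) {v : G → R} (hv : ∀ i, v (i + j) = c * v i) :
    v = 0 := by
  funext i
  have hfix : v i = c ^ addOrderOf j * v i := by
    simpa [addOrderOf_nsmul_eq_zero] using apply_add_nsmul_of_twisted hv (addOrderOf j) i
  have : (c ^ addOrderOf j - 1) * v i = 0 := by rw [sub_mul, ← hfix]; simp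
  exact (mul_eq_zero.mp this).resolve_left (sub_ne_zero.mpr hc)

theorem zpow_eq_zpow_of_zsmul_eq_zsmul [AddGroup G] [Group R] {c : R} {j : G}
    (hc : c ^ addOrderOf j = 1) {a b : ℤ} (h : a • j = b • j) : c ^ a = c ^ b :=
  zpow_eq_zpow_iff_modEq.mpr <| (zsmul_eq_zsmul_iff_modEq.mp h).of_dvd <|
    Int.natCast_dvd_natCast.mpr (orderOf_dvd_of_pow_eq_one hc)

theorem exists_twisted_of_pow_addOrderOf_eq_one [AddCommGroup G] [Group R] {c : R} {j : G}
    (hc : c ^ addOrderOf j = 1) : ∃ ψ : G → R, ∀ i, ψ (i + j) = c * ψ i := by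
  have hrep : ∀ i : G, ∃ k : ℤ, (i : G ⧸ zmultiples j).out = i + k • j := fun i => by
    obtain ⟨k, hk⟩ := mem_zmultiples_iff.mp <|
      QuotientAddGroup.eq.mp (QuotientAddGroup.out_eq' (i : G ⧸ zmultiples j)).symm
    exact ⟨k, by rw [hk]; abel⟩
  choose k hk using hrep
  refine ⟨fun i => c ^ (-k i), fun i => ?_⟩
  have hcoset : ((i + j : G) : G ⧸ zmultiples j) = i := QuotientAddGroup.eq.mpr (by simp)
  have hk' : (-k (i + j)) • j = (1 - k i) • j := by
    have h := (hk (i + j)).symm.trans (hcoset ▸ hk i)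
    rw [add_assoc] at h
    rw [neg_zsmul, sub_zsmul, one_zsmul, ← add_left_cancel h]
    abel
  calc c ^ (-k (i + j)) = c ^ (1 - k i) := zpow_eq_zpow_of_zsmul_eq_zsmul hc hk'
    _ = c * c ^ (-k i) := by rw [sub_eq_add_neg, zpow_one_add]

/-- Dividing by a nowhere vanishing twisted function `ψ` untwists every other one. -/
def twistedEquivPeriodic [Add G] [CommMonoid R] {c : Rˣ} {j : G} {ψ : G → Rˣ}
    (hψ : ∀ i, ψ (i + j) = c * ψ i) :
    {v : G → R // ∀ i, v (i + j) = c * v i} ≃ {u : G → R // Periodic u j} where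
  toFun v := ⟨fun i => ↑(ψ i)⁻¹ * v.1 i, fun i => by simp [hψ, v.2, mul_assoc]⟩
  invFun u := ⟨fun i => ψ i * u.1 i, fun i => by
    simp only [hψ, u.2 i, Units.val_mul, mul_assoc]⟩
  left_inv v := by ext; simp
  right_inv u := by ext; simp

def periodicEquivQuotient {β : Type*} [AddGroup G] (j : G) :
    {u : G → β // Periodic u j} ≃ (G ⧸ zmultiples j → β) where
  toFun u := u.2.lift
  invFun w := ⟨fun i => w i, fun i => congrArg w (QuotientAddGroup.eq.mpr (by simp))⟩
  left_inv u := rfl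
  right_inv w := funext fun x => QuotientAddGroup.induction_on x fun _ => rfl

theorem card_twisted [AddCommGroup G] [Finite G] [CommRing R] [NoZeroDivisors R] [Finite R]
    [DecidableEq R] (j : G) (c : Rˣ) :
    Nat.card {v : G → R // ∀ i, v (i + j) = c * v i} =
      if c ^ addOrderOf j = 1 then Nat.card R ^ (zmultiples j).index else 1 := by
  split_ifs with hc
  · obtain ⟨ψ, hψ⟩ := exists_twisted_of_pow_addOrderOf_eq_one hc
    rw [Nat.card_congr ((twistedEquivPeriodic hψ).trans (periodicEquivQuotient j)), Nat.card_fun,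
      index]
  · have hc' : (c : R) ^ addOrderOf j ≠ 1 := by
      rwa [← Units.val_pow_eq_pow_val, Ne, Units.val_eq_one]
    rw [Nat.card_eq_one_iff_unique]
    exact ⟨⟨fun v w => Subtype.ext ((eq_zero_of_twisted_of_pow_ne_one hc' v.2).trans
      (eq_zero_of_twisted_of_pow_ne_one hc' w.2).symm)⟩, ⟨⟨0, by simp⟩⟩⟩

end TwistedFunctions

theorem Nat.card_subtype_ne_and {α : Type*} [Finite α] {p : α → Prop} {a : α} (ha : p a) :
    Nat.card {x // x ≠ a ∧ p x} = Nat.card {x // p x} - 1 := by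
  have hset : {x | x ≠ a ∧ p x} = {x | p x} \ {a} := by ext; simp [and_comm]
  rw [← Set.coe_ofPred, ← Set.coe_ofPred, Nat.card_coe_set_eq, Nat.card_coe_set_eq, hset,
    Set.ncard_sdiff_singleton_of_mem (show a ∈ {x | p x} from ha)]

theorem AddSubgroup.index_zmultiples_eq_div {G : Type*} [AddGroup G] [Finite G] (j : G) :
    (zmultiples j).index = Nat.card G / addOrderOf j := by
  rw [← index_mul_card (zmultiples j), Nat.card_zmultiples,
    Nat.mul_div_cancel _ (addOrderOf_pos j)]

theorem count_twisted_eigenvectors (ℓ m : ℕ) (hℓ : ℓ.Prime) (hm : 1 ≤ m)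
    (j : ZMod m) (s : (ZMod ℓ)ˣ) :
    -- t = m / gcd(j, m) is the additive order of j in ZMod m
    addOrderOf j = m / Nat.gcd j.val m ∧
    -- number of vectors with v(i + j) = s • v(i) for all i
    Nat.card {v : ZMod m → ZMod ℓ // ∀ i, v (i + j) = (s : ZMod ℓ) * v i}
      = (if s ^ (m / Nat.gcd j.val m) = 1 then ℓ ^ (Nat.gcd j.val m) else 1) ∧
    -- number of nonzero fixed vectors of v ↦ s • (j • v)
    Nat.card {v : ZMod m → ZMod ℓ // v ≠ 0 ∧ ∀ i, (s : ZMod ℓ) * v (i + j) = v i}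
      = (if s ^ (m / Nat.gcd j.val m) = 1
          then ℓ ^ (m / (m / Nat.gcd j.val m)) - 1 else 0) := by
  have : NeZero m := ⟨by omega⟩
  have : Fact ℓ.Prime := ⟨hℓ⟩
  have hord : addOrderOf j = m / Nat.gcd j.val m := by
    conv_lhs => rw [← ZMod.natCast_zmod_val j]
    rw [ZMod.addOrderOf_coe _ (NeZero.ne m), Nat.gcd_comm]
  have hindex : (zmultiples j).index = m / (m / Nat.gcd j.val m) := by
    rw [index_zmultiples_eq_div, hord, Nat.card_zmod]
  have hfixed : ∀ v : ZMod m → ZMod ℓ,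
      (∀ i, (s : ZMod ℓ) * v (i + j) = v i) ↔ ∀ i, v (i + j) = ↑s⁻¹ * v i :=
    fun v => forall_congr' fun i => (Units.eq_inv_mul_iff_mul_eq s).symm
  refine ⟨hord, ?_, ?_⟩
  · rw [card_twisted, hord, hindex, Nat.div_div_self (Nat.gcd_dvd_right _ _) (NeZero.ne m),
      Nat.card_zmod]
  · rw [Nat.card_subtype_ne_and (by simp), Nat.card_congr (Equiv.subtypeEquivRight hfixed),
      card_twisted, hord, hindex, Nat.card_zmod]
    simp only [inv_pow, inv_eq_one]
    split_ifs <;> rfl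
end

section
/- Let ℓ be an odd prime and m ≥ 1 with m ∣ ℓ − 1. Let the group ZMod m × (ZMod ℓ)ˣ act on the set X of nonzero vectors v : ZMod m → ZMod ℓ by (r, s)·v = s • (r • v), where (r • v)(i) = v(i + r). Then the number of orbits of this action equals (1 / ((ℓ − 1) · m)) · Σ_{r = 0}^{m − 1} (m / gcd(r, m)) · (ℓ^{gcd(r, m)} − 1). -/
/-!
Burnside's lemma. A vector fixed by `(r, s)` satisfies `v (i + r) = s⁻¹ * v i`, so it is
determined by its values on representatives of the cosets of `⟨r⟩`, of which there are
`m / addOrderOf r = gcd r m`; these values can be prescribed freely exactly when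
`s ^ addOrderOf r = 1`. As `addOrderOf r ∣ m ∣ ℓ - 1`, there are `addOrderOf r` such units,
so each `r` contributes `(m / gcd r m) * (ℓ ^ gcd r m - 1)` fixed nonzero vectors.
-/

open MulAction

theorem MulAction.natCard_orbitRel_quotient_mul_natCard (G X : Type*) [Group G] [MulAction G X]
    [Fintype G] [Finite X] :
    Nat.card (orbitRel.Quotient G X) * Nat.card G = ∑ g : G, Nat.card (fixedBy X g) := by
  classical
  have := Fintype.ofFinite X
  simp only [Nat.card_eq_fintype_card]
  exact (sum_card_fixedBy_eq_card_orbits_mul_card_group G X).symm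

theorem SubMulAction.natCard_setOf_orbit {G α : Type*} [Group G] [MulAction G α]
    (p : SubMulAction G α) :
    Nat.card {o : Set α | ∃ v ∈ p, o = orbit G v} = Nat.card (orbitRel.Quotient G p) := by
  have hinj : Function.Injective fun q : orbitRel.Quotient G p => Subtype.val '' q.orbit :=
    (Set.image_injective.mpr Subtype.val_injective).comp orbitRel.Quotient.orbit_injective
  have hrange : Set.range (fun q : orbitRel.Quotient G p => Subtype.val '' q.orbit) =
      {o | ∃ v ∈ p, o = orbit G v} := by
    ext o
    constructor
    · rintro ⟨⟨v⟩, rfl⟩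
      exact ⟨v, v.2, SubMulAction.val_image_orbit v⟩
    · rintro ⟨v, hv, rfl⟩
      exact ⟨⟦⟨v, hv⟩⟧, SubMulAction.val_image_orbit _⟩
  rw [← hrange, Nat.card_range_of_injective hinj]

theorem zpow_eq_zpow_of_zsmul_eq {M A : Type*} [Group M] [AddGroup A] {s : M} {r : A}
    (hs : s ^ addOrderOf r = 1) {n n' : ℤ} (h : n • r = n' • r) : s ^ n = s ^ n' :=
  zpow_eq_zpow_iff_modEq.mpr <| (zsmul_eq_zsmul_iff_modEq.mp h).of_dvd <|
    Int.natCast_dvd_natCast.mpr (orderOf_dvd_of_pow_eq_one hs)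

theorem QuotientAddGroup.exists_zsmul_eq_out_sub {A : Type*} [AddCommGroup A] (r i : A) :
    ∃ n : ℤ, n • r = (i : A ⧸ AddSubgroup.zmultiples r).out - i := by
  have h : ((i : A ⧸ AddSubgroup.zmultiples r).out : A ⧸ AddSubgroup.zmultiples r) = i :=
    QuotientAddGroup.out_eq' _
  obtain ⟨n, hn⟩ := AddSubgroup.mem_zmultiples_iff.mp (QuotientAddGroup.eq.mp h.symm)
  exact ⟨n, by rw [hn]; abel⟩

theorem AddSubgroup.natCard_quotient_zmultiples {A : Type*} [AddGroup A] [Finite A] (r : A) :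
    Nat.card (A ⧸ AddSubgroup.zmultiples r) = Nat.card A / addOrderOf r := by
  rw [← (AddSubgroup.zmultiples r).index_mul_card, Nat.card_zmultiples,
    Nat.mul_div_cancel _ (addOrderOf_pos r), AddSubgroup.index]

theorem ZMod.sum_addOrderOf_eq_sum_range {M : Type*} [AddCommMonoid M] {m : ℕ} [NeZero m]
    (f : ℕ → M) :
    ∑ r : ZMod m, f (addOrderOf r) = ∑ j ∈ Finset.range m, f (m / j.gcd m) :=
  Finset.sum_nbij' ZMod.val (↑) (fun a _ => Finset.mem_range.mpr a.val_lt)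
    (fun _ _ => Finset.mem_univ _) (fun a _ => a.natCast_zmod_val)
    (fun _ hj => ZMod.val_cast_of_lt (Finset.mem_range.mp hj))
    fun a _ => by
      rw [Nat.gcd_comm, ← ZMod.addOrderOf_coe _ (NeZero.ne m), ZMod.natCast_zmod_val]

theorem ZMod.natCard_rootsOfUnity_of_dvd {ℓ k : ℕ} [Fact ℓ.Prime] (hk : k ≠ 0)
    (h : k ∣ ℓ - 1) :
    Nat.card (rootsOfUnity k (ZMod ℓ)) = k := by
  have : NeZero (ℓ - 1) := ⟨by have := (Fact.out : ℓ.Prime).two_le; omega⟩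
  have : NeZero k := ⟨hk⟩
  have := HasEnoughRootsOfUnity.of_dvd (ZMod ℓ) h
  exact HasEnoughRootsOfUnity.natCard_rootsOfUnity _ k

namespace TwistedShift

variable {A R : Type*}

instance [Add A] [Monoid R] : SMul (Multiplicative A × Rˣ) (A → R) :=
  ⟨fun g v i => g.2 * v (i + g.1.toAdd)⟩

theorem smul_apply [Add A] [Monoid R] (g : Multiplicative A × Rˣ) (v : A → R) (i : A) :
    (g • v) i = g.2 * v (i + g.1.toAdd) := rfl

instance [AddMonoid A] [Monoid R] : MulAction (Multiplicative A × Rˣ) (A → R) where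
  one_smul v := funext fun i => by simp [smul_apply]
  mul_smul g h v := funext fun i => by simp [smul_apply, mul_assoc, add_assoc]

theorem orbit_eq_setOf [AddMonoid A] [Monoid R] (v : A → R) :
    orbit (Multiplicative A × Rˣ) v =
      {w | ∃ (r : A) (s : Rˣ), w = fun i => (s : R) * v (i + r)} := by
  ext w
  constructor
  · rintro ⟨g, rfl⟩
    exact ⟨g.1.toAdd, g.2, rfl⟩
  · rintro ⟨r, s, rfl⟩
    exact ⟨(.ofAdd r, s), rfl⟩

theorem smul_zero [Add A] [MonoidWithZero R] (g : Multiplicative A × Rˣ) :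
    g • (0 : A → R) = 0 :=
  funext fun _ => mul_zero _

variable (A R) in
def nonzero [AddGroup A] [MonoidWithZero R] : SubMulAction (Multiplicative A × Rˣ) (A → R) where
  carrier := {v | v ≠ 0}
  smul_mem' g v hv := by
    rw [Set.mem_ofPred_eq, ← smul_zero g]
    exact (MulAction.injective g).ne hv

theorem natCard_setOf_orbit_nonzero [AddGroup A] [MonoidWithZero R] :
    Nat.card {o : Set (A → R) | ∃ v : A → R, v ≠ 0 ∧
        o = {w | ∃ (r : A) (s : Rˣ), w = fun i => (s : R) * v (i + r)}} =
      Nat.card (orbitRel.Quotient (Multiplicative A × Rˣ) (nonzero A R)) := by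
  simp_rw [← orbit_eq_setOf]
  exact SubMulAction.natCard_setOf_orbit (nonzero A R)

section Fixed

variable [AddCommGroup A] {r : A}

theorem apply_eq_zpow_mul_of_mem_fixedBy [Monoid R] {s : Rˣ} {v : A → R}
    (hv : v ∈ fixedBy (A → R) (Multiplicative.ofAdd r, s)) (n : ℤ) (i : A) :
    v i = ((s ^ n : Rˣ) : R) * v (i + n • r) := by
  have h := congrFun (mem_fixedBy_zpow hv n) i
  rw [smul_apply, Prod.pow_fst, Prod.pow_snd, ← ofAdd_zsmul, toAdd_ofAdd] at h
  exact h.symm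

theorem natCard_fixedBy_of_pow_addOrderOf_eq_one [Monoid R] {s : Rˣ}
    (hs : s ^ addOrderOf r = 1) :
    Nat.card (fixedBy (A → R) (Multiplicative.ofAdd r, s)) =
      Nat.card (A ⧸ AddSubgroup.zmultiples r → R) := by
  -- `n i • r` carries `i` to the chosen representative of its coset.
  choose n hn using QuotientAddGroup.exists_zsmul_eq_out_sub r
  have hmk (i : A) : ((i + r : A) : A ⧸ AddSubgroup.zmultiples r) = i :=
    QuotientAddGroup.mk_add_of_mem _ (AddSubgroup.mem_zmultiples r)
  have hn_add (i : A) : s ^ (1 + n (i + r)) = s ^ n i :=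
    zpow_eq_zpow_of_zsmul_eq hs (by rw [add_zsmul, one_zsmul, hn, hn, hmk]; abel)
  have hn_out (q : A ⧸ AddSubgroup.zmultiples r) : s ^ n q.out = 1 :=
    (zpow_eq_zpow_of_zsmul_eq hs (n' := 0)
      (by rw [hn q.out, QuotientAddGroup.out_eq' q, sub_self, zero_zsmul])).trans (zpow_zero s)
  refine Nat.card_congr
    { toFun := fun v q => v.1 q.out
      invFun := fun f => ⟨fun i => (s ^ n i : Rˣ) * f i, funext fun i => ?_⟩
      left_inv := fun v => Subtype.ext (funext fun i => ?_)
      right_inv := fun f => funext fun q => ?_ }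
  · change (s : R) * ((s ^ n (i + r) : Rˣ) * f (i + r : A)) = (s ^ n i : Rˣ) * f i
    rw [← hn_add i, zpow_one_add, Units.val_mul, mul_assoc, hmk]
  · rw [apply_eq_zpow_mul_of_mem_fixedBy v.2 (n i) i, hn, add_sub_cancel]
  · simp only [hn_out, QuotientAddGroup.out_eq', Units.val_one, one_mul]

theorem fixedBy_eq_zero_of_pow_addOrderOf_ne_one [MonoidWithZero R] [IsRightCancelMulZero R]
    {s : Rˣ} (hs : s ^ addOrderOf r ≠ 1) :
    fixedBy (A → R) (Multiplicative.ofAdd r, s) = {0} := by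
  refine Set.eq_singleton_iff_unique_mem.mpr ⟨smul_zero _, fun v hv => funext fun i => ?_⟩
  have h := apply_eq_zpow_mul_of_mem_fixedBy hv (addOrderOf r) i
  rw [natCast_zsmul, addOrderOf_nsmul_eq_zero, add_zero, zpow_natCast, eq_comm] at h
  by_contra hvi
  exact hs (Units.val_eq_one.mp ((mul_eq_right₀ hvi).mp h))

end Fixed

theorem natCard_fixedBy_nonzero [AddGroup A] [MonoidWithZero R] [Finite A] [Finite R]
    (g : Multiplicative A × Rˣ) :
    Nat.card (fixedBy (nonzero A R) g) = Nat.card (fixedBy (A → R) g) - 1 := by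
  have himage : Subtype.val '' fixedBy (nonzero A R) g = fixedBy (A → R) g \ {0} := by
    ext v
    constructor
    · rintro ⟨⟨v, hv⟩, hfix, rfl⟩
      exact ⟨congrArg Subtype.val hfix, hv⟩
    · rintro ⟨hfix, hv⟩
      exact ⟨⟨v, hv⟩, Subtype.ext hfix, rfl⟩
  rw [← Nat.card_image_of_injective Subtype.val_injective, himage, Nat.card_coe_set_eq,
    Set.ncard_sdiff_singleton_of_mem (s := fixedBy (A → R) g) (smul_zero g),
    Nat.card_coe_set_eq]

theorem natCard_fixedBy_nonzero_ofAdd [AddCommGroup A] [MonoidWithZero R]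
    [IsRightCancelMulZero R] [DecidableEq R] [Finite A] [Finite R] (r : A) (s : Rˣ) :
    Nat.card (fixedBy (nonzero A R) (Multiplicative.ofAdd r, s)) =
      if s ^ addOrderOf r = 1 then Nat.card R ^ (Nat.card A / addOrderOf r) - 1 else 0 := by
  rw [natCard_fixedBy_nonzero]
  split_ifs with hs
  · rw [natCard_fixedBy_of_pow_addOrderOf_eq_one hs, Nat.card_fun,
      AddSubgroup.natCard_quotient_zmultiples]
  · rw [fixedBy_eq_zero_of_pow_addOrderOf_ne_one hs, Nat.card_unique]

theorem sum_natCard_fixedBy_nonzero [AddCommGroup A] [CommMonoidWithZero R]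
    [IsRightCancelMulZero R] [Fintype A] [Fintype R] [DecidableEq R] :
    ∑ g : Multiplicative A × Rˣ, Nat.card (fixedBy (nonzero A R) g) =
      ∑ r : A, Nat.card (rootsOfUnity (addOrderOf r) R) *
        (Nat.card R ^ (Nat.card A / addOrderOf r) - 1) := by
  rw [Fintype.sum_prod_type]
  refine (Fintype.sum_equiv Multiplicative.ofAdd _ _ fun r => ?_).symm
  simp only [natCard_fixedBy_nonzero_ofAdd]
  rw [Finset.sum_ite, Finset.sum_const_zero, add_zero, Finset.sum_const, smul_eq_mul,
    Nat.card_congr (Equiv.subtypeEquivRight fun s => mem_rootsOfUnity _ s),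
    Nat.card_eq_fintype_card, Fintype.card_subtype]

theorem sum_natCard_fixedBy_nonzero_zmod {ℓ m : ℕ} [Fact ℓ.Prime] [NeZero m]
    (hdvd : m ∣ ℓ - 1) :
    ∑ g : Multiplicative (ZMod m) × (ZMod ℓ)ˣ,
        Nat.card (fixedBy (nonzero (ZMod m) (ZMod ℓ)) g) =
      ∑ j ∈ Finset.range m, m / j.gcd m * (ℓ ^ j.gcd m - 1) := by
  rw [sum_natCard_fixedBy_nonzero]
  simp only [Nat.card_zmod]
  calc ∑ r : ZMod m,
        Nat.card (rootsOfUnity (addOrderOf r) (ZMod ℓ)) * (ℓ ^ (m / addOrderOf r) - 1)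
      = ∑ r : ZMod m, addOrderOf r * (ℓ ^ (m / addOrderOf r) - 1) := by
        refine Finset.sum_congr rfl fun r _ => ?_
        have hr : addOrderOf r ∣ m := by simpa using addOrderOf_dvd_natCard r
        rw [ZMod.natCard_rootsOfUnity_of_dvd (addOrderOf_pos r).ne' (hr.trans hdvd)]
    _ = ∑ j ∈ Finset.range m, m / j.gcd m * (ℓ ^ (m / (m / j.gcd m)) - 1) :=
        ZMod.sum_addOrderOf_eq_sum_range fun k => k * (ℓ ^ (m / k) - 1)
    _ = ∑ j ∈ Finset.range m, m / j.gcd m * (ℓ ^ j.gcd m - 1) := by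
        refine Finset.sum_congr rfl fun j _ => ?_
        rw [Nat.div_div_self (Nat.gcd_dvd_right j m) (NeZero.ne m)]

end TwistedShift

open TwistedShift in
theorem burnside_orbit_count_Cl_wr_Cm_general (ℓ m : ℕ) (hℓ : ℓ.Prime)
    (hdvd : m ∣ ℓ - 1) :
    (Nat.card ↥{o : Set (ZMod m → ZMod ℓ) | ∃ v : ZMod m → ZMod ℓ, v ≠ 0 ∧
        o = {w | ∃ (r : ZMod m) (s : (ZMod ℓ)ˣ),
          w = fun i => (s : ZMod ℓ) * v (i + r)}} : ℚ)
      = (1 / (((ℓ : ℚ) - 1) * (m : ℚ))) *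
          ∑ r ∈ Finset.range m,
            ((m / Nat.gcd r m : ℕ) : ℚ) * ((ℓ : ℚ) ^ (Nat.gcd r m) - 1) := by
  have : Fact ℓ.Prime := ⟨hℓ⟩
  have hℓ1 : 1 < ℓ := hℓ.one_lt
  have : NeZero m := ⟨by rintro rfl; rw [zero_dvd_iff] at hdvd; omega⟩
  have hG : Nat.card (Multiplicative (ZMod m) × (ZMod ℓ)ˣ) = m * (ℓ - 1) := by
    rw [Nat.card_prod, Nat.card_eq_fintype_card, Fintype.card_multiplicative, ZMod.card,
      Nat.card_eq_fintype_card, ZMod.card_units]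
  have hcount := natCard_orbitRel_quotient_mul_natCard (Multiplicative (ZMod m) × (ZMod ℓ)ˣ)
    (nonzero (ZMod m) (ZMod ℓ))
  rw [hG, sum_natCard_fixedBy_nonzero_zmod hdvd] at hcount
  have hcountℚ := congrArg (Nat.cast : ℕ → ℚ) hcount
  push_cast [Nat.cast_sub hℓ1.le, Nat.cast_sub (Nat.one_le_pow _ _ hℓ.pos)] at hcountℚ
  have hℓ1ℚ : (ℓ : ℚ) - 1 ≠ 0 := sub_ne_zero.mpr (by exact_mod_cast hℓ1.ne')
  have hmℚ : (m : ℚ) ≠ 0 := by exact_mod_cast NeZero.ne m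
  rw [natCard_setOf_orbit_nonzero, ← hcountℚ]
  field_simp

theorem burnside_orbit_count_Cl_wr_Cm (ℓ m : ℕ) (hℓ : ℓ.Prime) (hodd : Odd ℓ)
    (hm : 1 ≤ m) (hdvd : m ∣ ℓ - 1) :
    (Nat.card ↥{o : Set (ZMod m → ZMod ℓ) | ∃ v : ZMod m → ZMod ℓ, v ≠ 0 ∧
        o = {w | ∃ (r : ZMod m) (s : (ZMod ℓ)ˣ),
          w = fun i => (s : ZMod ℓ) * v (i + r)}} : ℚ)
      = (1 / (((ℓ : ℚ) - 1) * (m : ℚ))) *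
          ∑ r ∈ Finset.range m,
            ((m / Nat.gcd r m : ℕ) : ℚ) * ((ℓ : ℚ) ^ (Nat.gcd r m) - 1) :=
  burnside_orbit_count_Cl_wr_Cm_general ℓ m hℓ hdvd
end

section
/- Let ℓ be an odd prime. Let the group ZMod ℓ × (ZMod ℓ²)ˣ act on the set of nonzero vectors v : ZMod ℓ → ZMod ℓ² by (r, s)·v = s • (r • v), where (r • v)(i) = v(i + r). Then the number of orbits of this action equals (ℓ^{2ℓ} − 1 + (ℓ − 1)(ℓ^{ℓ} − 1) + (ℓ − 1) · ℓ · (ℓ² − 1)) / (ℓ² (ℓ − 1)). -/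
/-!
Burnside's lemma for the action on all vectors; the zero vector is an orbit of its own.
Write `K` for the units congruent to `1` mod `ℓ`, a subgroup of order `ℓ`. The pair `(0, s)` fixes
the vectors with values in `{x | s x = x}`, which has `ℓ²`, `ℓ` or `1` elements according as
`s = 1`, `s ∈ K \ {1}` (then `s - 1` is `ℓ` times a unit) or `s ∉ K` (then `s - 1` is a unit).
For `r ≠ 0` the shift by `r` is an `ℓ`-cycle, so a fixed vector is determined by `v 0`, which has
to be fixed by `s⁻¹ ^ ℓ`; and `s^ℓ = 1` for `s ∈ K` by Lagrange, while `s^ℓ ∉ K` for `s ∉ K`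
by Fermat.
-/

section Periodic

variable {M : Type*} [Monoid M] {t a : M} {n : ℕ}

lemma pow_mul_eq_pow_mod_mul (h : t ^ n * a = a) (m : ℕ) : t ^ m * a = t ^ (m % n) * a := by
  have hpow : ∀ k, (t ^ n) ^ k * a = a := fun k => by
    induction k with
    | zero => simp
    | succ k ih => rw [pow_succ, mul_assoc, h, ih]
  conv_lhs => rw [← Nat.mod_add_div m n, pow_add, pow_mul, mul_assoc, hpow]

lemma pow_mul_eq_pow_mul_of_cast_eq (h : t ^ n * a = a) {m k : ℕ} (hmk : (m : ZMod n) = k) :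
    t ^ m * a = t ^ k * a := by
  rw [pow_mul_eq_pow_mod_mul h m, pow_mul_eq_pow_mod_mul h k,
    (ZMod.natCast_eq_natCast_iff' m k n).mp hmk]

lemma apply_add_nsmul_eq_pow_mul {A : Type*} [AddMonoid A] {v : A → M} {r : A}
    (hv : ∀ i, v (i + r) = t * v i) (i : A) (k : ℕ) : v (i + k • r) = t ^ k * v i := by
  induction k with
  | zero => simp
  | succ k ih => rw [succ_nsmul, ← add_assoc, hv, ih, pow_succ', mul_assoc]

variable (t) in
def shiftEigenEquiv [NeZero n] {r : ZMod n} (hr : IsUnit r) :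
    {v : ZMod n → M // ∀ i, v (i + r) = t * v i} ≃ {a : M // t ^ n * a = a} where
  toFun v := ⟨v.1 0, by
    simpa [nsmul_eq_mul] using (apply_add_nsmul_eq_pow_mul v.2 0 n).symm⟩
  -- `v (k • r) = t ^ k * a`, well defined on `ZMod n` because `t ^ n * a = a`
  invFun a := ⟨fun i => t ^ (i * r⁻¹).val * a.1, fun i => by
    have hshift : (((i + r) * r⁻¹).val : ZMod n) = ((i * r⁻¹).val + 1 : ℕ) := by
      simp [add_mul, ZMod.mul_inv_of_unit r hr]
    dsimp only
    rw [pow_mul_eq_pow_mul_of_cast_eq a.2 hshift, pow_succ', mul_assoc]⟩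
  left_inv v := by
    ext i
    have hi : (i * r⁻¹).val • r = i := by
      rw [nsmul_eq_mul, ZMod.natCast_zmod_val, mul_assoc, ZMod.inv_mul_of_unit r hr, mul_one]
    simpa [hi] using (apply_add_nsmul_eq_pow_mul v.2 0 (i * r⁻¹).val).symm
  right_inv a := by simp

end Periodic

open MulAction

section ShiftScale

variable (A R : Type*) [AddMonoid A] [Monoid R]

abbrev ShiftScale := Multiplicative A × Rˣ

instance : MulAction (ShiftScale A R) (A → R) where
  smul g v i := g.2 * v (i + g.1.toAdd)
  one_smul v := funext fun i => by simp [HSMul.hSMul]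
  mul_smul g h v := funext fun i => by simp [HSMul.hSMul, add_assoc, mul_assoc]

variable {A R}

lemma ShiftScale.mem_fixedBy_iff (g : ShiftScale A R) (v : A → R) :
    v ∈ fixedBy (A → R) g ↔ ∀ i, g.2 * v (i + g.1.toAdd) = v i :=
  funext_iff

lemma ShiftScale.orbit_eq (v : A → R) :
    orbit (ShiftScale A R) v = {w | ∃ (r : A) (s : Rˣ), w = fun i => (s : R) * v (i + r)} := by
  ext w
  constructor
  · rintro ⟨g, rfl⟩
    exact ⟨g.1.toAdd, g.2, rfl⟩
  · rintro ⟨r, s, rfl⟩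
    exact ⟨(Multiplicative.ofAdd r, s), rfl⟩

lemma ShiftScale.natCard_fixedBy_mk_one [Finite A] (s : Rˣ) :
    Nat.card (fixedBy (A → R) ((1 : Multiplicative A), s))
      = Nat.card {x : R | (s : R) * x = x} ^ Nat.card A := by
  have hfix : fixedBy (A → R) ((1 : Multiplicative A), s) = {v | ∀ i, (s : R) * v i = v i} :=
    Set.ext fun v => (ShiftScale.mem_fixedBy_iff _ v).trans (by simp)
  rw [hfix, ← Nat.card_fun]
  exact Nat.card_congr (Equiv.subtypePiEquivPi (p := fun _ x => (s : R) * x = x))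

lemma ShiftScale.natCard_fixedBy_mk_ofAdd {n : ℕ} [NeZero n] {r : ZMod n} (hr : IsUnit r)
    (s : Rˣ) :
    Nat.card (fixedBy (ZMod n → R) (Multiplicative.ofAdd r, s))
      = Nat.card {x : R | ((s⁻¹ ^ n : Rˣ) : R) * x = x} := by
  have hfix : fixedBy (ZMod n → R) (Multiplicative.ofAdd r, s)
      = {v | ∀ i, v (i + r) = ((s⁻¹ : Rˣ) : R) * v i} :=
    Set.ext fun v => (ShiftScale.mem_fixedBy_iff _ v).trans (by simp [Units.eq_inv_mul_iff_mul_eq])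
  rw [hfix, Units.val_pow_eq_pow_val]
  exact Nat.card_congr (shiftEigenEquiv _ hr)

end ShiftScale

section Burnside

variable {G X : Type*} [Group G] [MulAction G X]

lemma sum_natCard_fixedBy_eq [Fintype G] [Finite X] :
    ∑ g : G, Nat.card (fixedBy X g) = Nat.card (orbitRel.Quotient G X) * Nat.card G := by
  classical
  have := Fintype.ofFinite X
  simp only [Nat.card_eq_fintype_card]
  convert sum_card_fixedBy_eq_card_orbits_mul_card_group G X

lemma natCard_orbits_ne_add_one [Finite X] {x₀ : X} (hx₀ : ∀ g : G, g • x₀ = x₀) :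
    Nat.card {o : Set X | ∃ x, x ≠ x₀ ∧ o = orbit G x} + 1
      = Nat.card (orbitRel.Quotient G X) := by
  have horbit : orbit G x₀ = {x₀} := by
    ext x; simp [mem_orbit_iff, hx₀, eq_comm]
  have hrange : Set.range (orbitRel.Quotient.orbit (G := G) (α := X))
      = insert {x₀} {o : Set X | ∃ x, x ≠ x₀ ∧ o = orbit G x} := by
    ext o
    constructor
    · rintro ⟨q, rfl⟩
      induction q using Quotient.inductionOn' with | h x => ?_
      by_cases hx : x = x₀
      · exact .inl (hx ▸ horbit)
      · exact .inr ⟨x, hx, rfl⟩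
    · rintro (rfl | ⟨x, -, rfl⟩)
      · exact ⟨Quotient.mk'' x₀, horbit⟩
      · exact ⟨Quotient.mk'' x, rfl⟩
  have hnotMem : {x₀} ∉ {o : Set X | ∃ x, x ≠ x₀ ∧ o = orbit G x} := by
    rintro ⟨x, hx, hxo⟩
    exact hx (Set.eq_of_mem_singleton (hxo ▸ mem_orbit_self x))
  rw [← Nat.card_range_of_injective orbitRel.Quotient.orbit_injective, hrange,
    Nat.card_coe_set_eq, Nat.card_coe_set_eq, Set.ncard_insert_of_notMem hnotMem]

end Burnside

lemma Fintype.sum_ite_eq_card_mul {α R : Type*} [Fintype α] [CommRing R] (p : α → Prop)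
    [DecidablePred p] (b c : R) :
    ∑ x, (if p x then b else c) = Nat.card {x // p x} * b
      + (Nat.card α - Nat.card {x // p x}) * c := by
  classical
  rw [Nat.card_eq_fintype_card, Nat.card_eq_fintype_card, Finset.sum_ite, Finset.sum_const,
    Finset.sum_const, Fintype.card_subtype, Finset.filter_not, Finset.card_sdiff]
  simp [Nat.cast_sub (Finset.card_le_univ _)]

lemma Fintype.sum_ite_eq_one_ite_mem {G R : Type*} [Group G] [Fintype G] [DecidableEq G]
    [CommRing R] (K : Subgroup G) [DecidablePred (· ∈ K)] (a b c : R) :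
    ∑ g, (if g = 1 then a else if g ∈ K then b else c)
      = a - b + ∑ g, (if g ∈ K then b else c) := by
  have hsplit : ∀ g : G, (if g = 1 then a else if g ∈ K then b else c)
      = (if g = 1 then a - b else 0) + (if g ∈ K then b else c) := fun g => by
    split_ifs with h1 hK <;> simp_all [K.one_mem]
  simp [hsplit, Finset.sum_add_distrib]

lemma Nat.card_multiplicative (α : Type*) : Nat.card (Multiplicative α) = Nat.card α :=
  Nat.card_congr Multiplicative.toAdd

namespace ZMod

variable {p : ℕ} [hp : Fact p.Prime]

lemma isUnit_iff_cast_ne_zero (x : ZMod (p ^ 2)) : IsUnit x ↔ (x.cast : ZMod p) ≠ 0 := by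
  obtain ⟨a, rfl⟩ : ∃ a : ℕ, (a : ZMod (p ^ 2)) = x := ⟨x.val, natCast_zmod_val x⟩
  rw [isUnit_natCast_iff_not_dvd_pow hp.out two_pos, cast_natCast (dvd_pow_self p two_ne_zero),
    Ne, natCast_eq_zero_iff]

lemma prime_mul_eq_zero_iff (x : ZMod (p ^ 2)) :
    (p : ZMod (p ^ 2)) * x = 0 ↔ (x.cast : ZMod p) = 0 := by
  obtain ⟨a, rfl⟩ : ∃ a : ℕ, (a : ZMod (p ^ 2)) = x := ⟨x.val, natCast_zmod_val x⟩
  rw [← Nat.cast_mul, natCast_eq_zero_iff, cast_natCast (dvd_pow_self p two_ne_zero),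
    natCast_eq_zero_iff, pow_two, Nat.mul_dvd_mul_iff_left hp.out.pos]

lemma exists_isUnit_eq_prime_mul {d : ZMod (p ^ 2)} (hd : d ≠ 0) (hd' : (d.cast : ZMod p) = 0) :
    ∃ c : ZMod (p ^ 2), IsUnit c ∧ d = (p : ZMod (p ^ 2)) * c := by
  obtain ⟨a, rfl⟩ : ∃ a : ℕ, (a : ZMod (p ^ 2)) = d := ⟨d.val, natCast_zmod_val d⟩
  rw [cast_natCast (dvd_pow_self p two_ne_zero), natCast_eq_zero_iff] at hd'
  obtain ⟨m, rfl⟩ := hd'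
  refine ⟨m, ?_, by push_cast; rfl⟩
  rw [isUnit_iff_cast_ne_zero, cast_natCast (dvd_pow_self p two_ne_zero)]
  rintro hm
  refine hd ?_
  rw [Nat.cast_mul, prime_mul_eq_zero_iff, cast_natCast (dvd_pow_self p two_ne_zero), hm]

lemma natCard_setOf_cast_eq_zero : Nat.card {x : ZMod (p ^ 2) | (x.cast : ZMod p) = 0} = p := by
  have h := (castHom (dvd_pow_self p two_ne_zero) (ZMod p)).toAddMonoidHom.ker.card_mul_index
  rw [AddSubgroup.index_ker, AddMonoidHom.range_eq_top_of_surjective _ (ZMod.ringHom_surjective _),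
    AddSubgroup.card_top] at h
  simp only [Nat.card_zmod] at h
  exact Nat.eq_of_mul_eq_mul_right hp.out.pos (h.trans (pow_two p))

variable (p) in
abbrev principalUnits : Subgroup (ZMod (p ^ 2))ˣ := (unitsMap (dvd_pow_self p two_ne_zero)).ker

lemma mem_principalUnits_iff (u : (ZMod (p ^ 2))ˣ) :
    u ∈ principalUnits p ↔ ((u : ZMod (p ^ 2)).cast : ZMod p) = 1 := by
  rw [principalUnits, MonoidHom.mem_ker, ← Units.val_inj, unitsMap_val, Units.val_one]

lemma natCard_units_sq : Nat.card (ZMod (p ^ 2))ˣ = p * (p - 1) := by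
  rw [Nat.card_eq_fintype_card, card_units_eq_totient, Nat.totient_prime_pow hp.out two_pos,
    show 2 - 1 = 1 from rfl, pow_one]

lemma natCard_principalUnits : Nat.card (principalUnits p) = p := by
  have h := (principalUnits p).card_mul_index
  rw [principalUnits, Subgroup.index_ker, MonoidHom.range_eq_top_of_surjective _
    (unitsMap_surjective _), Subgroup.card_top, Nat.card_eq_fintype_card (α := (ZMod p)ˣ),
    card_units, natCard_units_sq] at h
  exact Nat.eq_of_mul_eq_mul_right (Nat.sub_pos_of_lt hp.out.one_lt) h

lemma pow_prime_eq_one_of_mem {u : (ZMod (p ^ 2))ˣ} (hu : u ∈ principalUnits p) : u ^ p = 1 := by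
  have h : (⟨u, hu⟩ : principalUnits p) ^ Nat.card (principalUnits p) = 1 := pow_card_eq_one'
  rw [natCard_principalUnits] at h
  exact congrArg Subtype.val h

lemma pow_prime_mem_principalUnits_iff {u : (ZMod (p ^ 2))ˣ} :
    u ^ p ∈ principalUnits p ↔ u ∈ principalUnits p := by
  rw [principalUnits, MonoidHom.mem_ker, MonoidHom.mem_ker, map_pow,
    show ∀ w : (ZMod p)ˣ, w ^ p = w from fun w => Units.ext (by simp [pow_card])]

lemma natCard_setOf_mul_eq_self (u : (ZMod (p ^ 2))ˣ) :
    Nat.card {x : ZMod (p ^ 2) | (u : ZMod (p ^ 2)) * x = x}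
      = if u = 1 then p ^ 2 else if u ∈ principalUnits p then p else 1 := by
  have hmul (x : ZMod (p ^ 2)) :
      (u : ZMod (p ^ 2)) * x = x ↔ ((u : ZMod (p ^ 2)) - 1) * x = 0 := by
    rw [sub_mul, one_mul, sub_eq_zero]
  have hdvd : p ∣ p ^ 2 := dvd_pow_self p two_ne_zero
  split_ifs with h1 hK
  · simp [h1]
  · obtain ⟨c, hc, hpc⟩ := exists_isUnit_eq_prime_mul (d := (u : ZMod (p ^ 2)) - 1)
      (sub_ne_zero.mpr (Units.val_eq_one.not.mpr h1))
      (by rw [cast_sub hdvd, cast_one hdvd, (mem_principalUnits_iff u).mp hK, sub_self])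
    have hset : {x | (u : ZMod (p ^ 2)) * x = x} = {x | (x.cast : ZMod p) = 0} := by
      ext x
      rw [Set.mem_ofPred_eq, hmul, hpc, mul_comm _ c, mul_assoc, hc.mul_right_eq_zero,
        prime_mul_eq_zero_iff, Set.mem_ofPred_eq]
    rw [hset, natCard_setOf_cast_eq_zero]
  · have hunit : IsUnit ((u : ZMod (p ^ 2)) - 1) := by
      rw [isUnit_iff_cast_ne_zero, cast_sub hdvd, cast_one hdvd, sub_ne_zero]
      exact (mem_principalUnits_iff u).not.mp hK
    have hset : {x | (u : ZMod (p ^ 2)) * x = x} = {0} := by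
      ext x
      rw [Set.mem_ofPred_eq, hmul, hunit.mul_right_eq_zero, Set.mem_singleton_iff]
    rw [hset, Nat.card_unique]

end ZMod

section ZModSq

open ZMod

variable {p : ℕ} [hp : Fact p.Prime]

lemma natCard_fixedBy_shiftScale (g : ShiftScale (ZMod p) (ZMod (p ^ 2))) :
    Nat.card (fixedBy (ZMod p → ZMod (p ^ 2)) g)
      = if g.1 = 1 then
          (if g.2 = 1 then p ^ (2 * p) else if g.2 ∈ principalUnits p then p ^ p else 1)
        else if g.2 ∈ principalUnits p then p ^ 2 else 1 := by
  obtain ⟨r, s⟩ := g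
  by_cases hr : r = 1
  · subst hr
    rw [ShiftScale.natCard_fixedBy_mk_one, natCard_setOf_mul_eq_self, Nat.card_zmod, if_pos rfl]
    split_ifs <;> ring
  · have hr' : IsUnit (Multiplicative.toAdd r) := Ne.isUnit (by simpa using hr)
    rw [if_neg hr, ← ofAdd_toAdd r, ShiftScale.natCard_fixedBy_mk_ofAdd hr',
      natCard_setOf_mul_eq_self]
    by_cases hs : s ∈ principalUnits p
    · rw [pow_prime_eq_one_of_mem (inv_mem hs), if_pos rfl, if_pos hs]
    · have hs' : s⁻¹ ^ p ∉ principalUnits p := by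
        rwa [pow_prime_mem_principalUnits_iff, inv_mem_iff]
      rw [if_neg fun h : s⁻¹ ^ p = 1 => hs' (h ▸ one_mem _), if_neg hs', if_neg hs]

lemma sum_natCard_fixedBy_shiftScale :
    ∑ g : ShiftScale (ZMod p) (ZMod (p ^ 2)),
        (Nat.card (fixedBy (ZMod p → ZMod (p ^ 2)) g) : ℚ)
      = p ^ (2 * p) + (p - 1) * p ^ p + p * (p - 2) + (p - 1) * (p ^ 3 + p * (p - 2)) := by
  simp only [natCard_fixedBy_shiftScale, Nat.cast_ite, Fintype.sum_prod_type, Finset.sum_ite_irrel,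
    Fintype.sum_ite_eq_one_ite_mem, Fintype.sum_ite_eq_card_mul, Nat.card_unique,
    Nat.card_multiplicative, Nat.card_zmod, natCard_principalUnits, natCard_units_sq]
  push_cast [Nat.cast_sub hp.out.one_le]
  ring

end ZModSq

theorem burnside_orbit_count_Cl2_wr_Cl_general (ℓ : ℕ) (hℓ : ℓ.Prime) :
    (Nat.card ↥{o : Set (ZMod ℓ → ZMod (ℓ ^ 2)) | ∃ v : ZMod ℓ → ZMod (ℓ ^ 2), v ≠ 0 ∧
        o = {w | ∃ (r : ZMod ℓ) (s : (ZMod (ℓ ^ 2))ˣ),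
          w = fun i => (s : ZMod (ℓ ^ 2)) * v (i + r)}} : ℚ)
      = ((ℓ : ℚ) ^ (2 * ℓ) - 1 + ((ℓ : ℚ) - 1) * ((ℓ : ℚ) ^ ℓ - 1)
          + ((ℓ : ℚ) - 1) * (ℓ : ℚ) * ((ℓ : ℚ) ^ 2 - 1))
        / ((ℓ : ℚ) ^ 2 * ((ℓ : ℚ) - 1)) := by
  have := Fact.mk hℓ
  simp_rw [← ShiftScale.orbit_eq]
  have hburnside := sum_natCard_fixedBy_eq (G := ShiftScale (ZMod ℓ) (ZMod (ℓ ^ 2)))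
    (X := ZMod ℓ → ZMod (ℓ ^ 2))
  rw [← natCard_orbits_ne_add_one (x₀ := 0) fun g => funext fun _ => mul_zero _, Nat.card_prod,
    Nat.card_multiplicative, Nat.card_zmod, ZMod.natCard_units_sq] at hburnside
  have hsum := sum_natCard_fixedBy_shiftScale (p := ℓ)
  rw [← Nat.cast_sum, hburnside] at hsum
  have hℓ1 : (ℓ : ℚ) - 1 ≠ 0 := sub_ne_zero.mpr (by exact_mod_cast hℓ.one_lt.ne')
  have hℓ0 : (ℓ : ℚ) ≠ 0 := by exact_mod_cast hℓ.ne_zero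
  push_cast [Nat.cast_sub hℓ.one_le] at hsum
  field_simp
  linear_combination hsum

theorem burnside_orbit_count_Cl2_wr_Cl (ℓ : ℕ) (hℓ : ℓ.Prime) (hodd : Odd ℓ) :
    (Nat.card ↥{o : Set (ZMod ℓ → ZMod (ℓ ^ 2)) | ∃ v : ZMod ℓ → ZMod (ℓ ^ 2), v ≠ 0 ∧
        o = {w | ∃ (r : ZMod ℓ) (s : (ZMod (ℓ ^ 2))ˣ),
          w = fun i => (s : ZMod (ℓ ^ 2)) * v (i + r)}} : ℚ)
      = ((ℓ : ℚ) ^ (2 * ℓ) - 1 + ((ℓ : ℚ) - 1) * ((ℓ : ℚ) ^ ℓ - 1)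
          + ((ℓ : ℚ) - 1) * (ℓ : ℚ) * ((ℓ : ℚ) ^ 2 - 1))
        / ((ℓ : ℚ) ^ 2 * ((ℓ : ℚ) - 1)) :=
  burnside_orbit_count_Cl2_wr_Cl_general ℓ hℓ
end

section
/- Let q > 1 be a real number, A ≥ 1 a positive integer, b ≥ 1 an integer, and let a : ℕ → ℝ be a sequence with a(m) ≥ 0 for all m. Suppose there are a real polynomial P of degree b − 1 with positive leading coefficient, constants C > 0, C' ≥ 0, and δ with 0 < δ < 1/A, such that for all m ≥ 1: |Σ_{j=0}^{b−1} a(m + j) · q^{−j/A} − C · q^{m/A} · P(m)| ≤ C' · q^{m(1/A − δ)}. Then there exist constants C₁, C₂ > 0 and M such that for all m ≥ M: C₁ · q^{m/A} · m^{b−1} ≤ Σ_{i=1}^{m} a(i) ≤ C₂ · q^{m/A} · m^{b−1}. -/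
/-!
Write `r = q^(1/A)` and `S m = ∑_{j<b} a(m+j) q^(-j/A)`. The power saving makes the error term
negligible against `C q^(m/A) P(m) ~ C lc(P) r^m m^(b-1)`, so `S =Θ r^m m^(b-1)`. Positivity
of `a` transfers this to the partial sums `T m = ∑_{i=1}^m a i`: from above, `a i ≤ S i` and
`∑_{i ≤ m} r^i i^(b-1) ≤ r/(r-1) · r^m m^(b-1)`; from below, `S n ≤ T (n + b - 1)`, and a shift
by `b - 1` changes `r^m m^(b-1)` by a bounded factor only.
-/

open Asymptotics Filter Finset Polynomial Topology

theorem isLittleO_rpow_mul_sub_mul_pow {q δ : ℝ} (hq : 1 < q) (hδ : 0 < δ) (α : ℝ) (d : ℕ) :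
    (fun m : ℕ => q ^ ((m : ℝ) * (α - δ))) =o[atTop] fun m => q ^ ((m : ℝ) * α) * (m : ℝ) ^ d := by
  have hq0 : 0 < q := by linarith
  have hdecay : Tendsto (fun m : ℕ => (q ^ (-δ)) ^ m) atTop (𝓝 0) :=
    tendsto_pow_atTop_nhds_zero_of_lt_one (Real.rpow_nonneg hq0.le _)
      (Real.rpow_lt_one_of_one_lt_of_neg hq (neg_neg_of_pos hδ))
  have hone : (fun _ : ℕ => (1 : ℝ)) =O[atTop] fun m : ℕ => (m : ℝ) ^ d := by
    refine IsBigO.of_bound 1 ?_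
    filter_upwards [eventually_ge_atTop 1] with m hm
    simpa using one_le_pow₀ (by exact_mod_cast hm : (1 : ℝ) ≤ m)
  refine ((isBigO_refl (fun m : ℕ => q ^ ((m : ℝ) * α)) atTop).mul_isLittleO
    (((isLittleO_one_iff ℝ).2 hdecay).trans_isBigO hone)).congr_left fun m => ?_
  rw [← Real.rpow_natCast, ← Real.rpow_mul hq0.le, ← Real.rpow_add hq0]
  ring_nf

theorem isEquivalent_of_abs_sub_le_rpow {u : ℕ → ℝ} {q A C C' δ : ℝ} {P : ℝ[X]}
    (hq : 1 < q) (hδ : 0 < δ) (hC : C ≠ 0) (hP : P ≠ 0)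
    (hu : ∀ m : ℕ, 1 ≤ m →
      |u m - C * q ^ ((m : ℝ) / A) * P.eval (m : ℝ)| ≤ C' * q ^ ((m : ℝ) * (1 / A - δ))) :
    u ~[atTop] fun m => C * P.leadingCoeff * (q ^ ((m : ℝ) / A) * (m : ℝ) ^ P.natDegree) := by
  set g : ℕ → ℝ := fun m => q ^ ((m : ℝ) / A) * (m : ℝ) ^ P.natDegree
  have hmain : (fun m : ℕ => C * q ^ ((m : ℝ) / A) * P.eval (m : ℝ)) ~[atTop]
      fun m => C * P.leadingCoeff * g m :=
    ((IsEquivalent.refl (u := fun m : ℕ => C * q ^ ((m : ℝ) / A))).mul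
      (P.isEquivalent_atTop_lead.comp_tendsto tendsto_natCast_atTop_atTop)).congr_right
      (Eventually.of_forall fun m => by simp only [g, Pi.mul_apply, Function.comp_apply]; ring)
  have herror : (fun m => u m - C * q ^ ((m : ℝ) / A) * P.eval (m : ℝ)) =o[atTop] g := by
    refine (IsBigO.of_bound C' ?_).trans_isLittleO
      ((isLittleO_rpow_mul_sub_mul_pow hq hδ (1 / A) P.natDegree).congr_right fun m => ?_)
    · filter_upwards [eventually_ge_atTop 1] with m hm
      rw [Real.norm_eq_abs, Real.norm_of_nonneg (Real.rpow_nonneg (by linarith) _)]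
      exact hu m hm
    · simp only [g, mul_one_div]
  have hg : g =O[atTop] fun m => C * P.leadingCoeff * g m :=
    (isTheta_const_mul_left (mul_ne_zero hC (leadingCoeff_ne_zero.2 hP))).2
      (isTheta_refl g atTop) |>.isBigO_symm
  exact (herror.trans_isBigO (hg.trans hmain.isBigO_symm)).isEquivalent.trans hmain

theorem Asymptotics.IsBigO.of_comp_add_nat {E F : Type*} [Norm E] [Norm F] {f : ℕ → E}
    {g : ℕ → F} (k : ℕ) (h : (fun n => f (n + k)) =O[atTop] fun n => g (n + k)) :
    f =O[atTop] g := by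
  have hsub : ∀ᶠ n in atTop, n - k + k = n := by
    filter_upwards [eventually_ge_atTop k] with n hn using Nat.sub_add_cancel hn
  exact (h.comp_tendsto (tendsto_sub_atTop_nat k)).congr'
    (hsub.mono fun n hn => congrArg f hn) (hsub.mono fun n hn => congrArg g hn)

theorem Asymptotics.IsBigO.exists_forall_norm_le_of_ne_zero {f g : ℕ → ℝ} (h : f =O[atTop] g)
    (hg : ∀ m, 1 ≤ m → g m ≠ 0) : ∃ K, 0 ≤ K ∧ ∀ m, 1 ≤ m → ‖f m‖ ≤ K * ‖g m‖ := by
  have hshift : (fun m => f (m + 1)) =O[cofinite] fun m => g (m + 1) := by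
    rw [Nat.cofinite_eq_atTop]
    exact h.comp_tendsto (tendsto_add_atTop_nat 1)
  obtain ⟨K, hK⟩ := (isBigO_cofinite_iff fun m hm => absurd hm (hg _ le_add_self)).1 hshift
  refine ⟨max K 0, le_max_right _ _, fun m hm => ?_⟩
  obtain ⟨n, rfl⟩ := Nat.exists_eq_add_of_le' hm
  exact (hK n).trans (by gcongr; exact le_max_left _ _)

theorem isBigO_pow_mul_pow_comp_add (r : ℝ) (d k : ℕ) :
    (fun n : ℕ => r ^ (n + k) * ((n + k : ℕ) : ℝ) ^ d) =O[atTop]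
      fun n : ℕ => r ^ n * (n : ℝ) ^ d := by
  refine IsBigO.of_bound (|r| ^ k * ((k : ℝ) + 1) ^ d) ?_
  filter_upwards [eventually_ge_atTop 1] with n hn
  have hnk : ((n + k : ℕ) : ℝ) ≤ ((k : ℝ) + 1) * n := by
    push_cast
    nlinarith [(by exact_mod_cast hn : (1 : ℝ) ≤ n), (k.cast_nonneg : (0 : ℝ) ≤ k)]
  simp only [norm_mul, norm_pow, Real.norm_eq_abs, Nat.abs_cast, pow_add]
  calc |r| ^ n * |r| ^ k * ((n + k : ℕ) : ℝ) ^ d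
      ≤ |r| ^ n * |r| ^ k * (((k : ℝ) + 1) * n) ^ d := by gcongr
    _ = |r| ^ k * ((k : ℝ) + 1) ^ d * (|r| ^ n * (n : ℝ) ^ d) := by rw [mul_pow]; ring

theorem sum_Icc_pow_mul_pow_le {r : ℝ} (hr : 1 < r) (d m : ℕ) :
    ∑ i ∈ Icc 1 m, r ^ i * (i : ℝ) ^ d ≤ r / (r - 1) * (r ^ m * (m : ℝ) ^ d) := by
  have hr1 : 0 < r - 1 := sub_pos.2 hr
  calc ∑ i ∈ Icc 1 m, r ^ i * (i : ℝ) ^ d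
      ≤ ∑ i ∈ range (m + 1), r ^ i * (m : ℝ) ^ d := by
        refine sum_le_sum_of_subset_of_nonneg (fun i hi => ?_) (fun i _ _ => by positivity)
          |>.trans' (sum_le_sum fun i hi => ?_)
        · simp only [mem_Icc, mem_range] at hi ⊢; omega
        · gcongr; exact_mod_cast (mem_Icc.1 hi).2
    _ = (r ^ (m + 1) - 1) / (r - 1) * (m : ℝ) ^ d := by rw [← sum_mul, geom_sum_eq hr.ne']
    _ ≤ r ^ (m + 1) / (r - 1) * (m : ℝ) ^ d := by gcongr; linarith
    _ = r / (r - 1) * (r ^ m * (m : ℝ) ^ d) := by rw [pow_succ]; ring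

def windowSum (a w : ℕ → ℝ) (b m : ℕ) : ℝ := ∑ j ∈ range b, a (m + j) * w j

section WindowSum

variable {a w : ℕ → ℝ} {b : ℕ}

theorem windowSum_nonneg (ha : ∀ m, 0 ≤ a m) (hw : ∀ j, 0 ≤ w j) (m : ℕ) :
    0 ≤ windowSum a w b m :=
  sum_nonneg fun j _ => mul_nonneg (ha _) (hw j)

theorem le_windowSum (ha : ∀ m, 0 ≤ a m) (hw : ∀ j, 0 ≤ w j) (hw0 : w 0 = 1) (hb : 0 < b)
    (m : ℕ) : a m ≤ windowSum a w b m := by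
  simpa [windowSum, hw0] using single_le_sum (f := fun j => a (m + j) * w j)
    (fun j _ => mul_nonneg (ha _) (hw j)) (mem_range.2 hb)

theorem windowSum_le_sum_Icc (ha : ∀ m, 0 ≤ a m) (hw : ∀ j, w j ≤ 1) {n : ℕ} (hn : 1 ≤ n) :
    windowSum a w b n ≤ ∑ i ∈ Icc 1 (n + (b - 1)), a i :=
  calc windowSum a w b n ≤ ∑ j ∈ range b, a (n + j) :=
        sum_le_sum fun j _ => mul_le_of_le_one_right (ha _) (hw j)
    _ = ∑ i ∈ Ico n (n + b), a i := by rw [sum_Ico_eq_sum_range, Nat.add_sub_cancel_left]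
    _ ≤ ∑ i ∈ Icc 1 (n + (b - 1)), a i :=
        sum_le_sum_of_subset_of_nonneg (fun i hi => by simp only [mem_Ico, mem_Icc] at hi ⊢; omega)
          fun i _ _ => ha i

variable {r : ℝ} {d : ℕ}

theorem sum_Icc_isBigO_of_windowSum_isBigO (ha : ∀ m, 0 ≤ a m) (hw : ∀ j, 0 ≤ w j)
    (hw0 : w 0 = 1) (hb : 0 < b) (hr : 1 < r)
    (hS : windowSum a w b =O[atTop] fun m => r ^ m * (m : ℝ) ^ d) :
    (fun m => ∑ i ∈ Icc 1 m, a i) =O[atTop] fun m => r ^ m * (m : ℝ) ^ d := by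
  have hr0 : 0 < r := zero_lt_one.trans hr
  obtain ⟨K, hK0, hK⟩ := hS.exists_forall_norm_le_of_ne_zero fun m hm =>
    (mul_pos (pow_pos hr0 m) (pow_pos (by exact_mod_cast hm) d)).ne'
  have hg : ∀ m : ℕ, ‖r ^ m * (m : ℝ) ^ d‖ = r ^ m * (m : ℝ) ^ d := fun m =>
    Real.norm_of_nonneg (by positivity)
  refine IsBigO.of_bound (K * (r / (r - 1))) (Eventually.of_forall fun m => ?_)
  rw [Real.norm_of_nonneg (sum_nonneg fun i _ => ha i), hg]
  calc ∑ i ∈ Icc 1 m, a i ≤ ∑ i ∈ Icc 1 m, K * (r ^ i * (i : ℝ) ^ d) := by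
        refine sum_le_sum fun i hi => ?_
        have hKi := hK i (mem_Icc.1 hi).1
        rw [hg] at hKi
        exact (le_windowSum ha hw hw0 hb i).trans ((le_abs_self _).trans hKi)
    _ ≤ K * (r / (r - 1) * (r ^ m * (m : ℝ) ^ d)) := by
        rw [← mul_sum]; gcongr; exact sum_Icc_pow_mul_pow_le hr d m
    _ = K * (r / (r - 1)) * (r ^ m * (m : ℝ) ^ d) := by ring

theorem isBigO_sum_Icc_of_isBigO_windowSum (ha : ∀ m, 0 ≤ a m) (hw : ∀ j, 0 ≤ w j)
    (hw1 : ∀ j, w j ≤ 1)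
    (hS : (fun m : ℕ => r ^ m * (m : ℝ) ^ d) =O[atTop] windowSum a w b) :
    (fun m : ℕ => r ^ m * (m : ℝ) ^ d) =O[atTop] fun m => ∑ i ∈ Icc 1 m, a i := by
  have hwindow : windowSum a w b =O[atTop] fun n => ∑ i ∈ Icc 1 (n + (b - 1)), a i := by
    refine IsBigO.of_bound 1 ?_
    filter_upwards [eventually_ge_atTop 1] with n hn
    rw [one_mul, Real.norm_of_nonneg (windowSum_nonneg ha hw n),
      Real.norm_of_nonneg (sum_nonneg fun i _ => ha i)]
    exact windowSum_le_sum_Icc ha hw1 hn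
  exact IsBigO.of_comp_add_nat (b - 1)
    ((isBigO_pow_mul_pow_comp_add r d (b - 1)).trans (hS.trans hwindow))

end WindowSum

theorem Asymptotics.IsTheta.exists_pos_bounds {f g : ℕ → ℝ} (hf : ∀ m, 0 ≤ f m)
    (hg : ∀ m, 0 ≤ g m) (h : f =Θ[atTop] g) :
    ∃ C₁ C₂ : ℝ, 0 < C₁ ∧ 0 < C₂ ∧ ∃ M : ℕ, ∀ m : ℕ, M ≤ m → C₁ * g m ≤ f m ∧ f m ≤ C₂ * g m := by
  obtain ⟨c, hc, hgf⟩ := h.isBigO_symm.exists_pos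
  obtain ⟨K, hK, hfg⟩ := h.isBigO.exists_pos
  obtain ⟨M, hM⟩ := eventually_atTop.1 (hgf.bound.and hfg.bound)
  refine ⟨c⁻¹, K, inv_pos.2 hc, hK, M, fun m hm => ?_⟩
  obtain ⟨hgfm, hfgm⟩ := hM m hm
  simp only [Real.norm_of_nonneg (hf m), Real.norm_of_nonneg (hg m)] at hgfm hfgm
  exact ⟨by rwa [inv_mul_le_iff₀ hc], hfgm⟩

theorem tauberian_window_sums_general (q : ℝ) (hq : 1 < q) (A : ℕ) (hA : 1 ≤ A)
    (b : ℕ) (hb : 1 ≤ b) (a : ℕ → ℝ) (ha : ∀ m, 0 ≤ a m)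
    (P : Polynomial ℝ) (hPdeg : P.natDegree = b - 1) (hPlead : 0 < P.leadingCoeff)
    (C C' δ : ℝ) (hC : 0 < C) (hδ0 : 0 < δ)
    (h : ∀ m : ℕ, 1 ≤ m →
      |(∑ j ∈ Finset.range b, a (m + j) * q ^ (-(j : ℝ) / (A : ℝ)))
          - C * q ^ ((m : ℝ) / (A : ℝ)) * P.eval (m : ℝ)|
        ≤ C' * q ^ ((m : ℝ) * (1 / (A : ℝ) - δ))) :
    ∃ C₁ C₂ : ℝ, 0 < C₁ ∧ 0 < C₂ ∧ ∃ M : ℕ, ∀ m : ℕ, M ≤ m →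
      C₁ * q ^ ((m : ℝ) / (A : ℝ)) * (m : ℝ) ^ (b - 1) ≤ (∑ i ∈ Finset.Icc 1 m, a i) ∧
      (∑ i ∈ Finset.Icc 1 m, a i) ≤ C₂ * q ^ ((m : ℝ) / (A : ℝ)) * (m : ℝ) ^ (b - 1) := by
  have hq0 : 0 < q := zero_lt_one.trans hq
  have hA0 : (0 : ℝ) < A := by exact_mod_cast hA
  set r := q ^ (1 / (A : ℝ))
  have hr : 1 < r := Real.one_lt_rpow hq (by positivity)
  have hpow : ∀ m : ℕ, q ^ ((m : ℝ) / A) = r ^ m := fun m => by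
    rw [← Real.rpow_natCast, ← Real.rpow_mul hq0.le, one_div_mul_eq_div]
  set w : ℕ → ℝ := fun j => q ^ (-(j : ℝ) / A)
  have hw : ∀ j, 0 ≤ w j := fun j => Real.rpow_nonneg hq0.le _
  have hw1 : ∀ j, w j ≤ 1 := fun j => Real.rpow_le_one_of_one_le_of_nonpos hq.le
    (div_nonpos_of_nonpos_of_nonneg (neg_nonpos.2 j.cast_nonneg) hA0.le)
  have hw0 : w 0 = 1 := by simp [w]
  have hS : windowSum a w b =Θ[atTop] fun m => r ^ m * (m : ℝ) ^ (b - 1) := by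
    have hequiv := isEquivalent_of_abs_sub_le_rpow (u := windowSum a w b) hq hδ0 hC.ne'
      (leadingCoeff_ne_zero.1 hPlead.ne') h
    simpa only [isTheta_const_mul_right (mul_pos hC hPlead).ne', hpow, hPdeg]
      using hequiv.isTheta
  have hT : (fun m => ∑ i ∈ Icc 1 m, a i) =Θ[atTop] fun m => r ^ m * (m : ℝ) ^ (b - 1) :=
    ⟨sum_Icc_isBigO_of_windowSum_isBigO ha hw hw0 hb hr hS.isBigO,
      isBigO_sum_Icc_of_isBigO_windowSum ha hw hw1 hS.isBigO_symm⟩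
  simpa only [hpow, mul_assoc] using
    hT.exists_pos_bounds (fun m => sum_nonneg fun i _ => ha i) fun m => by positivity

theorem tauberian_window_sums (q : ℝ) (hq : 1 < q) (A : ℕ) (hA : 1 ≤ A)
    (b : ℕ) (hb : 1 ≤ b) (a : ℕ → ℝ) (ha : ∀ m, 0 ≤ a m)
    (P : Polynomial ℝ) (hPdeg : P.natDegree = b - 1) (hPlead : 0 < P.leadingCoeff)
    (C C' δ : ℝ) (hC : 0 < C) (hC' : 0 ≤ C') (hδ0 : 0 < δ) (hδ1 : δ < 1 / (A : ℝ))
    (h : ∀ m : ℕ, 1 ≤ m →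
      |(∑ j ∈ Finset.range b, a (m + j) * q ^ (-(j : ℝ) / (A : ℝ)))
          - C * q ^ ((m : ℝ) / (A : ℝ)) * P.eval (m : ℝ)|
        ≤ C' * q ^ ((m : ℝ) * (1 / (A : ℝ) - δ))) :
    ∃ C₁ C₂ : ℝ, 0 < C₁ ∧ 0 < C₂ ∧ ∃ M : ℕ, ∀ m : ℕ, M ≤ m →
      C₁ * q ^ ((m : ℝ) / (A : ℝ)) * (m : ℝ) ^ (b - 1) ≤ (∑ i ∈ Finset.Icc 1 m, a i) ∧
      (∑ i ∈ Finset.Icc 1 m, a i) ≤ C₂ * q ^ ((m : ℝ) / (A : ℝ)) * (m : ℝ) ^ (b - 1) :=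
  tauberian_window_sums_general q hq A hA b hb a ha P hPdeg hPlead C C' δ hC hδ0 h
end

section
/- Let K be a number field that is Galois over ℚ with Galois group isomorphic to ZMod 4 (cyclic of order 4). Then there is no element x ∈ K and rational number c < 0 with x² = c. In particular, K contains no square root of −3, so the field ℚ(ζ₃) = ℚ(√−3) cannot be embedded into any cyclic quartic extension of ℚ. -/
/-!
Complex conjugation, transported to `K` through a complex embedding, is an automorphism `τ` with
`τ² = 1`; since `x² = c < 0`, `x` maps to a purely imaginary number, so `τ x = -x`. In the cyclic
group of order 4 every element `τ` with `τ² = 1` is a square `σ²`, and `σ x = ±x` because `x²` is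
rational, hence `τ x = σ (σ x) = x`. Thus `x = -x`, i.e. `x = 0`, contradicting `c ≠ 0`.
-/

open NumberField ComplexEmbedding

theorem exists_sq_eq_of_sq_eq_one_of_mulEquiv_zmod_four {G : Type*} [Monoid G]
    (e : G ≃* Multiplicative (ZMod 4)) {g : G} (hg : g ^ 2 = 1) : ∃ s : G, s ^ 2 = g := by
  have hZ4 : ∀ a : Multiplicative (ZMod 4), a ^ 2 = 1 → ∃ s, s ^ 2 = a := by decide
  obtain ⟨s, hs⟩ := hZ4 (e g) (by rw [← map_pow, hg, map_one])
  exact ⟨e.symm s, e.injective (by rw [map_pow, e.apply_symm_apply, hs])⟩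

theorem AlgEquiv.apply_apply_eq_self_of_sq_eq_algebraMap {F K : Type*} [CommSemiring F]
    [Field K] [Algebra F K] (σ : K ≃ₐ[F] K) {x : K} {c : F} (hx : x ^ 2 = algebraMap F K c) :
    σ (σ x) = x := by
  have hsign : σ x = x ∨ σ x = -x :=
    sq_eq_sq_iff_eq_or_eq_neg.mp (by rw [← map_pow, hx, AlgEquiv.commutes])
  rcases hsign with h | h
  · rw [h, h]
  · rw [h, map_neg, h, neg_neg]

theorem Complex.conj_eq_neg_of_sq_eq_ofReal_neg {z : ℂ} {r : ℝ} (hz : z ^ 2 = r) (hr : r < 0) :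
    starRingEnd ℂ z = -z := by
  have hconj : (starRingEnd ℂ z) ^ 2 = z ^ 2 := by rw [← map_pow, hz, Complex.conj_ofReal]
  refine (sq_eq_sq_iff_eq_or_eq_neg.mp hconj).resolve_left fun hreal ↦ ?_
  obtain ⟨s, rfl⟩ := Complex.conj_eq_iff_real.mp hreal
  have : s ^ 2 = r := by exact_mod_cast hz
  nlinarith [sq_nonneg s]

namespace NumberField.ComplexEmbedding

theorem exists_isConj_of_isReal_comp {k K : Type*} [Field k] [Field K] [Algebra k K]
    [IsGalois k K] {φ : K →+* ℂ} (hφ : IsReal (φ.comp (algebraMap k K))) :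
    ∃ σ : Gal(K/k), IsConj φ σ := by
  obtain ⟨σ, hσ⟩ := exists_comp_symm_eq_of_comp_eq φ (conjugate φ) (by
    ext r
    simpa using (RingHom.congr_fun hφ r).symm)
  exact ⟨σ.symm, hσ.symm⟩

theorem IsConj.apply_eq_neg_of_sq_eq_neg {K : Type*} [Field K] [Algebra ℚ K] {φ : K →+* ℂ}
    {σ : Gal(K/ℚ)} (hσ : IsConj φ σ) {x : K} {c : ℚ} (hx : x ^ 2 = algebraMap ℚ K c)
    (hc : c < 0) : σ x = -x := by
  have hφx : φ x ^ 2 = ((c : ℝ) : ℂ) := by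
    rw [← map_pow, hx, eq_ratCast, map_ratCast, Complex.ofReal_ratCast]
  apply φ.injective
  rw [hσ.eq, map_neg]
  exact Complex.conj_eq_neg_of_sq_eq_ofReal_neg hφx (by exact_mod_cast hc)

end NumberField.ComplexEmbedding

theorem no_imaginary_quadratic_in_cyclic_quartic (K : Type*) [Field K] [NumberField K]
    [IsGalois ℚ K] (h : Nonempty ((K ≃ₐ[ℚ] K) ≃* Multiplicative (ZMod 4))) :
    (¬ ∃ (x : K) (c : ℚ), c < 0 ∧ x ^ 2 = algebraMap ℚ K c) ∧
    ∀ x : K, x ^ 2 ≠ (-3 : K) := by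
  have hneg : ¬ ∃ (x : K) (c : ℚ), c < 0 ∧ x ^ 2 = algebraMap ℚ K c := by
    rintro ⟨x, c, hc, hx⟩
    obtain ⟨e⟩ := h
    let φ : K →+* ℂ := Classical.choice inferInstance
    obtain ⟨τ, hτ⟩ := exists_isConj_of_isReal_comp (k := ℚ) (φ := φ) (RingHom.ext_rat _ _)
    have hτ2 : τ ^ 2 = 1 := AlgEquiv.ext (isConj_apply_apply hτ)
    obtain ⟨σ, rfl⟩ := exists_sq_eq_of_sq_eq_one_of_mulEquiv_zmod_four e hτ2
    have hfix : x = -x := by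
      calc x = σ (σ x) := (σ.apply_apply_eq_self_of_sq_eq_algebraMap hx).symm
        _ = -x := hτ.apply_eq_neg_of_sq_eq_neg hx hc
    rw [self_eq_neg.mp hfix, sq, zero_mul, eq_comm, map_eq_zero] at hx
    exact hc.ne hx
  exact ⟨hneg, fun x hx ↦ hneg ⟨x, -3, by norm_num, by simp [hx]⟩⟩
end
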